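/- arXiv:1811.11285 — 3 statements merged into one kernel-verified Lean document; each statement's English description precedes it below -/
import Mathlib

section
/- The generating function identity: the generating function (in q) for partitions enumerated by B_{d,k,i}(n) equals the product over all parts allowed, i.e. ∑_{n≥0} B_{d,k,i}(n) q^n = ∏_{j≥1, j ≢ 0, ±di (mod (2k+1)d)} 1/(1−q^j), as formal power series in q, given that the d=1 case (Gordon's theorem, ∑_{n≥0} B_{1,k,i}(n) q^n = ∏_{j ≢ 0,±i mod 2k+1} 1/(1−q^j)) holds. -/
/-- Number of partitions of `n` where `d` appears at most `i-1` times and any two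
consecutive multiples of `d` together appear at most `k-1` times. -/
noncomputable def Bcount (d k i n : ℕ) : ℕ :=
  Nat.card {p : n.Partition //
    p.parts.count d ≤ i - 1 ∧
    ∀ j : ℕ, 1 ≤ j → p.parts.count (d * j) + p.parts.count (d * j + d) ≤ k - 1}

namespace GordonAux

open Multiset Finset

/-- number of partitions of `r` with all parts in `S` -/
noncomputable def pcount (S : Set ℕ) (r : ℕ) : ℕ :=
  Nat.card {p : r.Partition // ∀ j ∈ p.parts, j ∈ S}

/-- total number of partitions of `n` -/
noncomputable def pAll (n : ℕ) : ℕ := Nat.card (Nat.Partition n)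

lemma part_le {n : ℕ} (p : n.Partition) {j : ℕ} (hj : j ∈ p.parts) : j ≤ n := by
  have := Multiset.single_le_sum (fun x (_ : x ∈ p.parts) => Nat.zero_le x) j hj
  rwa [p.parts_sum] at this

lemma pcount_congr {S₁ S₂ : Set ℕ} {r : ℕ}
    (h : ∀ j, 0 < j → j ≤ r → (j ∈ S₁ ↔ j ∈ S₂)) : pcount S₁ r = pcount S₂ r := by
  apply Nat.card_congr (Equiv.subtypeEquivRight ?_)
  intro p
  constructor <;> intro hp j hj
  · exact (h j (p.parts_pos hj) (part_le p hj)).mp (hp j hj)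
  · exact (h j (p.parts_pos hj) (part_le p hj)).mpr (hp j hj)

lemma pcount_eq_pAll {S : Set ℕ} {n : ℕ} (h : ∀ j, 0 < j → j ≤ n → j ∈ S) :
    pcount S n = pAll n := by
  apply Nat.card_congr
  exact Equiv.subtypeUnivEquiv (fun p j hj => h j (p.parts_pos hj) (part_le p hj))

lemma pcount_le (S : Set ℕ) (n : ℕ) : pcount S n ≤ pAll n := by
  classical
  rw [pcount, pAll, Nat.card_eq_fintype_card, Nat.card_eq_fintype_card]
  exact Fintype.card_subtype_le _

lemma bcount_le (k i n : ℕ) : Bcount 1 k i n ≤ pAll n := by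
  classical
  rw [Bcount, pAll, Nat.card_eq_fintype_card, Nat.card_eq_fintype_card]
  exact Fintype.card_subtype_le _

/-- The generic splitting lemma: partitions of `n` satisfying a condition `CG` that factors
through the split into parts satisfying `P` and parts not satisfying `P`. -/
lemma split_card (n : ℕ) (P : ℕ → Prop) (CA CB CG : Multiset ℕ → Prop)
    (hcompat : ∀ s1 s2 : Multiset ℕ, (∀ j ∈ s1, P j) → (∀ j ∈ s2, ¬ P j) →
      (CG (s1 + s2) ↔ CA s1 ∧ CB s2)) :
    Nat.card {p : n.Partition // CG p.parts} =
      ∑ uv ∈ Finset.HasAntidiagonal.antidiagonal n,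
        Nat.card {p : Nat.Partition uv.1 // (∀ j ∈ p.parts, P j) ∧ CA p.parts} *
        Nat.card {p : Nat.Partition uv.2 // (∀ j ∈ p.parts, ¬ P j) ∧ CB p.parts} := by
  classical
  rw [Nat.card_eq_fintype_card, Fintype.card_subtype]
  rw [Finset.card_eq_sum_card_fiberwise
    (f := fun p : n.Partition => ((p.parts.filter P).sum, (p.parts.filter (fun j => ¬ P j)).sum))
    (t := Finset.HasAntidiagonal.antidiagonal n)
    (fun p _ => by
      rw [Finset.mem_coe, Finset.HasAntidiagonal.mem_antidiagonal, ← Multiset.sum_add, Multiset.filter_add_not, p.parts_sum])]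
  refine Finset.sum_congr rfl fun uv huv => ?_
  obtain ⟨u, v⟩ := uv
  have huvn : u + v = n := Finset.HasAntidiagonal.mem_antidiagonal.mp huv
  rw [Nat.card_eq_fintype_card, Nat.card_eq_fintype_card, ← Fintype.card_prod,
    Finset.filter_filter, ← Fintype.card_subtype]
  apply Fintype.card_congr
  refine
    { toFun := fun p =>
        (⟨⟨p.1.parts.filter P, fun hj => p.1.parts_pos (Multiset.mem_of_mem_filter hj),
            by have := p.2.2; simp only [Prod.mk.injEq] at this; exact this.1⟩,
          fun j hj => (Multiset.mem_filter.mp hj).2, ?_⟩,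
         ⟨⟨p.1.parts.filter (fun j => ¬ P j), fun hj => p.1.parts_pos (Multiset.mem_of_mem_filter hj),
            by have := p.2.2; simp only [Prod.mk.injEq] at this; exact this.2⟩,
          fun j hj => (Multiset.mem_filter.mp hj).2, ?_⟩)
      invFun := fun x =>
        ⟨⟨x.1.1.parts + x.2.1.parts,
            fun hj => by
              rcases Multiset.mem_add.mp hj with h | h
              exacts [x.1.1.parts_pos h, x.2.1.parts_pos h],
            by rw [Multiset.sum_add, x.1.1.parts_sum, x.2.1.parts_sum, huvn]⟩,
          ?_, ?_⟩
      left_inv := ?_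
      right_inv := ?_ }
  · -- CA of the filtered multiset
    have h := (hcompat (p.1.parts.filter P) (p.1.parts.filter (fun j => ¬ P j))
      (fun j hj => (Multiset.mem_filter.mp hj).2) (fun j hj => (Multiset.mem_filter.mp hj).2))
    rw [Multiset.filter_add_not] at h
    exact (h.mp p.2.1).1
  · have h := (hcompat (p.1.parts.filter P) (p.1.parts.filter (fun j => ¬ P j))
      (fun j hj => (Multiset.mem_filter.mp hj).2) (fun j hj => (Multiset.mem_filter.mp hj).2))
    rw [Multiset.filter_add_not] at h
    exact (h.mp p.2.1).2
  · -- CG of the combination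
    exact (hcompat x.1.1.parts x.2.1.parts x.1.2.1 x.2.2.1).mpr ⟨x.1.2.2, x.2.2.2⟩
  · -- fiber condition of the combination
    simp only [Prod.mk.injEq]
    constructor
    · rw [Multiset.filter_add, Multiset.filter_eq_self.mpr x.1.2.1,
        Multiset.filter_eq_nil.mpr (fun j hj hPj => x.2.2.1 j hj hPj), add_zero, x.1.1.parts_sum]
    · rw [Multiset.filter_add, Multiset.filter_eq_nil.mpr (fun j hj hPj => hPj (x.1.2.1 j hj)),
        Multiset.filter_eq_self.mpr x.2.2.1, zero_add, x.2.1.parts_sum]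
  · intro p
    apply Subtype.ext
    apply Nat.Partition.ext
    exact Multiset.filter_add_not _ _
  · intro x
    have hfil : (x.1.1.parts + x.2.1.parts).filter P = x.1.1.parts := by
      rw [Multiset.filter_add, Multiset.filter_eq_self.mpr x.1.2.1,
        Multiset.filter_eq_nil.mpr (fun j hj hPj => x.2.2.1 j hj hPj), add_zero]
    have hfil' : (x.1.1.parts + x.2.1.parts).filter (fun j => ¬ P j) = x.2.1.parts := by
      rw [Multiset.filter_add, Multiset.filter_eq_nil.mpr (fun j hj hPj => hPj (x.1.2.1 j hj)),
        Multiset.filter_eq_self.mpr x.2.2.1, zero_add]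
    ext : 1
    · exact Subtype.ext (Nat.Partition.ext hfil)
    · exact Subtype.ext (Nat.Partition.ext hfil')


lemma card_replicate (a u : ℕ) (ha : 0 < a) :
    Nat.card {p : u.Partition // ∀ j ∈ p.parts, j = a} = if a ∣ u then 1 else 0 := by
  have key : ∀ p : u.Partition, (∀ j ∈ p.parts, j = a) →
      p.parts = Multiset.replicate (Multiset.card p.parts) a ∧
        a * (Multiset.card p.parts) = u := by
    intro p hp
    have h1 : p.parts = Multiset.replicate (Multiset.card p.parts) a :=
      (Multiset.eq_replicate_card).mpr hp
    refine ⟨h1, ?_⟩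
    have h2 := p.parts_sum
    rw [h1, Multiset.sum_replicate, smul_eq_mul] at h2
    rw [mul_comm]; exact h2
  split_ifs with h
  · obtain ⟨m, rfl⟩ := h
    rw [Nat.card_eq_one_iff_unique]
    constructor
    · constructor
      rintro ⟨p, hp⟩ ⟨p', hp'⟩
      obtain ⟨e1, e2⟩ := key p hp
      obtain ⟨e1', e2'⟩ := key p' hp'
      have hcard : Multiset.card p.parts = Multiset.card p'.parts :=
        Nat.eq_of_mul_eq_mul_left ha (e2.trans e2'.symm)
      exact Subtype.ext (Nat.Partition.ext (by rw [e1, e1', hcard]))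
    · refine ⟨⟨⟨Multiset.replicate m a, ?_, by simp [Multiset.sum_replicate, mul_comm]⟩,
        fun j hj => Multiset.eq_of_mem_replicate hj⟩⟩
      intro j hj
      rw [Multiset.eq_of_mem_replicate hj]; exact ha
  · have : IsEmpty {p : u.Partition // ∀ j ∈ p.parts, j = a} := by
      refine ⟨fun x => h ⟨Multiset.card x.1.parts, ?_⟩⟩
      exact (key x.1 x.2).2.symm
    exact Nat.card_of_isEmpty

lemma card_dmul (d k i : ℕ) (hd : 0 < d) (u : ℕ) :
    Nat.card {p : u.Partition // (∀ j ∈ p.parts, d ∣ j) ∧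
        (p.parts.count d ≤ i - 1 ∧
          ∀ j : ℕ, 1 ≤ j → p.parts.count (d * j) + p.parts.count (d * j + d) ≤ k - 1)} =
      if d ∣ u then Bcount 1 k i (u / d) else 0 := by
  have hd0 : d ≠ 0 := hd.ne'
  have hinj : Function.Injective (fun x : ℕ => d * x) := fun a b hab =>
    Nat.eq_of_mul_eq_mul_left hd hab
  split_ifs with h
  · obtain ⟨m, rfl⟩ := h
    rw [Nat.mul_div_cancel_left m hd, Bcount]
    apply Nat.card_congr
    apply Equiv.symm
    apply Equiv.ofBijective (f := ?_) ?_
    · intro p'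
      refine ⟨⟨p'.1.parts.map (fun x => d * x), ?_, ?_⟩, ?_, ?_, ?_⟩
      · intro j hj
        obtain ⟨x, hx, rfl⟩ := Multiset.mem_map.mp hj
        exact Nat.mul_pos hd (p'.1.parts_pos hx)
      · rw [Multiset.sum_map_mul_left]
        simp only [Multiset.map_id']
        rw [p'.1.parts_sum]
      · intro j hj
        obtain ⟨x, _, rfl⟩ := Multiset.mem_map.mp hj
        exact dvd_mul_right d x
      · show Multiset.count d (p'.1.parts.map (fun x => d * x)) ≤ i - 1
        have e : Multiset.count (d * 1) (p'.1.parts.map (fun x => d * x)) =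
            Multiset.count 1 p'.1.parts := Multiset.count_map_eq_count' _ _ hinj _
        rw [mul_one] at e
        rw [e]
        have := p'.2.1
        simpa using this
      · intro j hj
        rw [show d * j + d = d * (j + 1) by ring]
        rw [Multiset.count_map_eq_count' _ _ hinj, Multiset.count_map_eq_count' _ _ hinj]
        have := p'.2.2 j hj
        simpa using this
    · constructor
      · intro p1 p2 h12
        apply Subtype.ext
        apply Nat.Partition.ext
        have := congrArg (fun z => (z : {p : (d * m).Partition // _}).1.parts) h12
        simp only [Subtype.ext_iff, Nat.Partition.ext_iff] at h12
        exact Multiset.map_injective hinj h12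
      · rintro ⟨p, hdiv, hc1, hc2⟩
        set s : Multiset ℕ := p.parts.map (fun x => x / d) with hs
        have hmap : s.map (fun x => d * x) = p.parts := by
          rw [hs, Multiset.map_map]
          rw [show ((fun x => d * x) ∘ fun x => x / d) = fun x : ℕ => d * (x / d) from rfl]
          rw [Multiset.map_congr rfl (fun x hx => Nat.mul_div_cancel' (hdiv x hx))]
          exact Multiset.map_id _
        have hsum : d * s.sum = d * m := by
          have : ((s.map (fun x => d * x)).sum) = d * s.sum := by
            rw [Multiset.sum_map_mul_left]; simp [Multiset.map_id']
          rw [← this, hmap, p.parts_sum]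
        have hssum : s.sum = m := Nat.eq_of_mul_eq_mul_left hd hsum
        have hpos : ∀ {x : ℕ}, x ∈ s → 0 < x := by
          intro x hx
          obtain ⟨y, hy, rfl⟩ := Multiset.mem_map.mp hx
          exact Nat.div_pos (Nat.le_of_dvd (p.parts_pos hy) (hdiv y hy)) hd
        refine ⟨⟨⟨s, hpos, hssum⟩, ?_, ?_⟩, ?_⟩
        · have : Multiset.count (d * 1) (s.map (fun x => d * x)) = Multiset.count 1 s :=
            Multiset.count_map_eq_count' _ _ hinj _
          rw [hmap, mul_one] at this
          simpa using this ▸ hc1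
        · intro j hj
          have e1 : Multiset.count (d * j) (s.map (fun x => d * x)) = Multiset.count j s :=
            Multiset.count_map_eq_count' _ _ hinj _
          have e2 : Multiset.count (d * (j+1)) (s.map (fun x => d * x)) = Multiset.count (j+1) s :=
            Multiset.count_map_eq_count' _ _ hinj _
          rw [hmap] at e1 e2
          have := hc2 j hj
          rw [show d * j + d = d * (j + 1) by ring] at this
          simpa [← e1, ← e2] using this
        · apply Subtype.ext
          apply Nat.Partition.ext
          exact hmap
  · have : IsEmpty {p : u.Partition // (∀ j ∈ p.parts, d ∣ j) ∧
        (p.parts.count d ≤ i - 1 ∧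
          ∀ j : ℕ, 1 ≤ j → p.parts.count (d * j) + p.parts.count (d * j + d) ≤ k - 1)} := by
      refine ⟨fun x => h ?_⟩
      have : d ∣ x.1.parts.sum := Multiset.dvd_sum (fun y hy => x.2.1 y hy)
      rwa [x.1.parts_sum] at this
    exact Nat.card_of_isEmpty


lemma pcount_empty (r : ℕ) : pcount ∅ r = if r = 0 then 1 else 0 := by
  split_ifs with h
  · subst h
    rw [pcount, Nat.card_eq_one_iff_unique]
    constructor
    · constructor
      rintro ⟨p, hp⟩ ⟨p', hp'⟩
      have e : ∀ p0 : Nat.Partition 0, p0.parts = 0 := by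
        intro p0
        rw [Multiset.eq_zero_iff_forall_notMem]
        intro y hy
        have h1 := p0.parts_pos hy
        have h2 := Multiset.single_le_sum (fun x (_ : x ∈ p0.parts) => Nat.zero_le x) y hy
        rw [p0.parts_sum] at h2
        omega
      exact Subtype.ext (Nat.Partition.ext ((e p).trans (e p').symm))
    · exact ⟨⟨⟨0, by simp, by simp⟩, by simp⟩⟩
  · rw [pcount]
    have : IsEmpty {p : r.Partition // ∀ j ∈ p.parts, j ∈ (∅ : Set ℕ)} := by
      refine ⟨fun x => h ?_⟩
      have e : x.1.parts = 0 := by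
        rw [Multiset.eq_zero_iff_forall_notMem]
        intro y hy; exact x.2 y hy
      rw [← x.1.parts_sum, e]; simp
    exact Nat.card_of_isEmpty

lemma pcount_insert (a : ℕ) (ha : 0 < a) (S : Set ℕ) (haS : a ∉ S) (n : ℕ) :
    pcount (insert a S) n =
      ∑ uv ∈ Finset.HasAntidiagonal.antidiagonal n, (if a ∣ uv.1 then 1 else 0) * pcount S uv.2 := by
  have h := split_card n (fun j => j = a) (fun _ => True) (fun s => ∀ j ∈ s, j ∈ S)
    (fun s => ∀ j ∈ s, j ∈ insert a S) ?_
  · rw [pcount, h]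
    refine Finset.sum_congr rfl fun uv _ => ?_
    congr 1
    · rw [← card_replicate a uv.1 ha]
      exact Nat.card_congr (Equiv.subtypeEquivRight (fun p => iff_of_eq (and_true _)))
    · rw [pcount]
      apply Nat.card_congr (Equiv.subtypeEquivRight ?_)
      intro p
      constructor
      · exact fun hp => hp.2
      · exact fun hp => ⟨fun j hj hja => haS (hja ▸ hp j hj), hp⟩
  · intro s1 s2 h1 h2
    constructor
    · intro hg
      refine ⟨trivial, fun j hj => ?_⟩
      have := hg j (Multiset.mem_add.mpr (Or.inr hj))
      exact (Set.mem_insert_iff.mp this).resolve_left (h2 j hj)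
    · rintro ⟨-, hb⟩
      intro j hj
      rcases Multiset.mem_add.mp hj with h | h
      · rw [h1 j h]; exact Set.mem_insert a S
      · exact Set.mem_insert_of_mem a (hb j h)


lemma bcount_split (d k i n : ℕ) (hd : 0 < d) :
    Bcount d k i n = ∑ uv ∈ Finset.HasAntidiagonal.antidiagonal n,
      (if d ∣ uv.1 then Bcount 1 k i (uv.1 / d) else 0) * pcount {j | ¬ d ∣ j} uv.2 := by
  have h := split_card n (fun j => d ∣ j)
    (CA := fun s => s.count d ≤ i - 1 ∧
      ∀ j : ℕ, 1 ≤ j → s.count (d * j) + s.count (d * j + d) ≤ k - 1)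
    (CB := fun _ => True)
    (CG := fun s => s.count d ≤ i - 1 ∧
      ∀ j : ℕ, 1 ≤ j → s.count (d * j) + s.count (d * j + d) ≤ k - 1) ?_
  · rw [Bcount, h]
    refine Finset.sum_congr rfl fun uv _ => ?_
    congr 1
    · exact card_dmul d k i hd uv.1
    · rw [pcount]
      apply Nat.card_congr (Equiv.subtypeEquivRight ?_)
      intro p
      constructor
      · exact fun hp j hj => hp.1 j hj
      · exact fun hp => ⟨hp, trivial⟩
  · intro s1 s2 h1 h2
    have hc : ∀ x : ℕ, d ∣ x → s2.count x = 0 := fun x hx =>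
      Multiset.count_eq_zero.mpr (fun hm => h2 x hm hx)
    have e0 : (s1 + s2).count d = s1.count d := by
      rw [Multiset.count_add, hc d dvd_rfl, add_zero]
    have e1 : ∀ j : ℕ, (s1 + s2).count (d * j) = s1.count (d * j) := fun j => by
      rw [Multiset.count_add, hc _ (dvd_mul_right d j), add_zero]
    have e2 : ∀ j : ℕ, (s1 + s2).count (d * j + d) = s1.count (d * j + d) := fun j => by
      rw [Multiset.count_add, hc _ ((dvd_mul_right d j).add dvd_rfl), add_zero]
    simp only [e0, e1, e2, and_true]


lemma hasSum_multiples (a : ℕ) (ha : 0 < a) {q : ℂ} (hq : ‖q‖ < 1) :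
    HasSum (fun u => (if a ∣ u then (1 : ℂ) else 0) * q ^ u) (1 - q ^ a)⁻¹ := by
  have hinj : Function.Injective (fun m : ℕ => a * m) := fun x y h =>
    Nat.eq_of_mul_eq_mul_left ha h
  have hqa : ‖q ^ a‖ < 1 := by
    rw [norm_pow]
    calc ‖q‖ ^ a ≤ ‖q‖ := pow_le_of_le_one (norm_nonneg q) hq.le ha.ne'
    _ < 1 := hq
  have hgeom : HasSum (fun m : ℕ => (q ^ a) ^ m) (1 - q ^ a)⁻¹ :=
    hasSum_geometric_of_norm_lt_one hqa
  have hcomp : (fun u => (if a ∣ u then (1 : ℂ) else 0) * q ^ u) ∘ (fun m : ℕ => a * m) =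
      fun m : ℕ => (q ^ a) ^ m := by
    funext m
    simp only [Function.comp_apply, if_pos (Dvd.intro m rfl), one_mul, ← pow_mul]
  rw [← hcomp] at hgeom
  rw [← Function.Injective.hasSum_iff hinj ?_]
  · exact hgeom
  · intro u hu
    rw [if_neg, zero_mul]
    intro ⟨c, hc⟩
    exact hu ⟨c, hc.symm⟩


lemma euler_finset {q : ℂ} (hq : ‖q‖ < 1) (T : Finset ℕ) :
    (∀ j ∈ T, 0 < j) →
      Summable (fun r => ‖(pcount (↑T) r : ℂ) * q ^ r‖) ∧
      ∑' r, (pcount (↑T) r : ℂ) * q ^ r = ∏ j ∈ T, (1 - q ^ j)⁻¹ := by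
  induction T using Finset.induction_on with
  | empty =>
    intro _
    constructor
    · apply summable_of_ne_finset_zero (s := {(0 : ℕ)})
      intro r hr
      rw [Finset.mem_singleton] at hr
      simp [pcount_empty, hr]
    · rw [tsum_eq_single 0 ?_]
      · simp [pcount_empty]
      · intro r hr; simp [pcount_empty, hr]
  | @insert a T' haT ih =>
    intro hpos
    have ha : 0 < a := hpos a (Finset.mem_insert_self a T')
    have hT' : ∀ j ∈ T', 0 < j := fun j hj => hpos j (Finset.mem_insert_of_mem hj)
    obtain ⟨ihs, ihe⟩ := ih hT'
    set f : ℕ → ℂ := fun u => (if a ∣ u then (1 : ℂ) else 0) * q ^ u with hf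
    set g : ℕ → ℂ := fun v => (pcount (↑T') v : ℂ) * q ^ v with hg
    have hfs : Summable fun u => ‖f u‖ := by
      apply Summable.of_nonneg_of_le (fun u => norm_nonneg _) (fun u => ?_)
        (summable_geometric_of_lt_one (norm_nonneg q) hq)
      rw [hf]
      simp only [norm_mul, norm_pow]
      split_ifs with h
      · simp
      · simp [pow_nonneg (norm_nonneg q)]
    have key : ∀ n : ℕ, ∑ uv ∈ Finset.HasAntidiagonal.antidiagonal n, f uv.1 * g uv.2
        = (pcount (↑(insert a T')) n : ℂ) * q ^ n := by
      intro n
      rw [Finset.coe_insert, pcount_insert a ha (↑T') (by simpa using haT) n]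
      push_cast
      rw [Finset.sum_mul]
      refine Finset.sum_congr rfl fun uv huv => ?_
      have hn : uv.1 + uv.2 = n := Finset.HasAntidiagonal.mem_antidiagonal.mp huv
      rw [hf, hg]
      simp only []
      rw [← hn, pow_add]
      push_cast [apply_ite (Nat.cast : ℕ → ℂ)]
      ring
    constructor
    · have h2 := summable_norm_sum_mul_antidiagonal_of_summable_norm (g := g) hfs ihs
      simpa only [key] using h2
    · have hprod := tsum_mul_tsum_eq_tsum_sum_antidiagonal_of_summable_norm hfs ihs
      rw [Finset.prod_insert haT, ← ihe, ← (hasSum_multiples a ha hq).tsum_eq, hprod]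
      exact (tsum_congr key).symm


lemma pAll_summable {x : ℝ} (h0 : 0 ≤ x) (h1 : x < 1) :
    Summable (fun n => (pAll n : ℝ) * x ^ n) := by
  have h3 : (0 : ℝ) < 1 - x := by linarith
  have hxC : ‖(x : ℂ)‖ < 1 := by rwa [Complex.norm_real, Real.norm_eq_abs, abs_of_nonneg h0]
  apply summable_of_sum_range_le (c := Real.exp ((1 - x)⁻¹ * (1 - x)⁻¹))
    (fun n => mul_nonneg (Nat.cast_nonneg _) (pow_nonneg h0 n))
  intro N
  set T := Finset.Icc 1 N with hT
  have hTpos : ∀ j ∈ T, 0 < j := by intro j hj; rw [hT, Finset.mem_Icc] at hj; omega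
  obtain ⟨hs, he⟩ := euler_finset hxC T hTpos
  have hnorm : ∀ r : ℕ, ‖(pcount (↑T) r : ℂ) * (x : ℂ) ^ r‖ = (pcount (↑T) r : ℝ) * x ^ r := by
    intro r
    rw [norm_mul, norm_pow, Complex.norm_natCast, Complex.norm_real, Real.norm_eq_abs,
      abs_of_nonneg h0]
  have hsR : Summable (fun r => (pcount (↑T) r : ℝ) * x ^ r) := by
    simpa only [hnorm] using hs
  have hbound : ∑ n ∈ Finset.range N, (pAll n : ℝ) * x ^ n
      ≤ ∑' r, (pcount (↑T) r : ℝ) * x ^ r := by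
    have h1' : ∀ n ∈ Finset.range N, (pAll n : ℝ) * x ^ n = (pcount (↑T) n : ℝ) * x ^ n := by
      intro n hn
      rw [Finset.mem_range] at hn
      rw [pcount_eq_pAll]
      intro j hj hjn
      rw [hT]
      simp only [Finset.coe_Icc, Set.mem_Icc]
      omega
    rw [Finset.sum_congr rfl h1']
    exact Summable.sum_le_tsum (Finset.range N)
      (fun r _ => mul_nonneg (Nat.cast_nonneg _) (pow_nonneg h0 r)) hsR
  refine hbound.trans ?_
  -- tsum equals norm of the finite product
  have hofreal : ((∑' r, (pcount (↑T) r : ℝ) * x ^ r : ℝ) : ℂ)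
      = ∑' r, (pcount (↑T) r : ℂ) * (x : ℂ) ^ r := by
    have hmap := Complex.ofRealCLM.map_tsum hsR
    simp only [Complex.ofRealCLM_apply] at hmap
    rw [hmap]
    push_cast
    rfl
  have htsum : ∑' r, (pcount (↑T) r : ℝ) * x ^ r = ‖∏ j ∈ T, (1 - (x : ℂ) ^ j)⁻¹‖ := by
    rw [← he, ← hofreal, Complex.norm_real, Real.norm_eq_abs, abs_of_nonneg]
    exact tsum_nonneg (fun r => mul_nonneg (Nat.cast_nonneg _) (pow_nonneg h0 r))
  rw [htsum, norm_prod]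
  have hfac : ∀ j ∈ T, ‖(1 - (x : ℂ) ^ j)⁻¹‖ = (1 - x ^ j)⁻¹ := by
    intro j hj
    have hj1 := hTpos j hj
    have hxj : x ^ j ≤ x := pow_le_of_le_one h0 h1.le hj1.ne'
    rw [norm_inv]
    congr 1
    rw [show (1 - (x : ℂ) ^ j) = ((1 - x ^ j : ℝ) : ℂ) by push_cast; ring,
      Complex.norm_real, Real.norm_eq_abs, abs_of_nonneg (by nlinarith)]
  rw [Finset.prod_congr rfl hfac]
  have hfac2 : ∀ j ∈ T, (1 - x ^ j)⁻¹ ≤ Real.exp (x ^ j * (1 - x)⁻¹) := by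
    intro j hj
    have hj1 := hTpos j hj
    have hxj : x ^ j ≤ x := pow_le_of_le_one h0 h1.le hj1.ne'
    have hxj0 : 0 ≤ x ^ j := pow_nonneg h0 j
    have hpos : (0 : ℝ) < 1 - x ^ j := by linarith
    have hinv : (1 - x) * (1 - x)⁻¹ = 1 := mul_inv_cancel₀ h3.ne'
    have hinvpos : (0 : ℝ) ≤ (1 - x)⁻¹ := inv_nonneg.mpr h3.le
    have step1 : (1 - x ^ j)⁻¹ ≤ 1 + x ^ j * (1 - x)⁻¹ := by
      rw [← one_div, div_le_iff₀ hpos]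
      have e : x ^ j * ((1 - x) * (1 - x)⁻¹) = x ^ j := by rw [hinv, mul_one]
      have hint2 : 0 ≤ x ^ j * (1 - x)⁻¹ * (x - x ^ j) :=
        mul_nonneg (mul_nonneg hxj0 hinvpos) (by linarith)
      nlinarith [e, hint2]
    refine step1.trans ?_
    have := Real.add_one_le_exp (x ^ j * (1 - x)⁻¹)
    linarith
  calc ∏ j ∈ T, (1 - x ^ j)⁻¹ ≤ ∏ j ∈ T, Real.exp (x ^ j * (1 - x)⁻¹) := by
        apply Finset.prod_le_prod
        · intro j hj
          have hj1 := hTpos j hj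
          have hxj : x ^ j ≤ x := pow_le_of_le_one h0 h1.le hj1.ne'
          exact inv_nonneg.mpr (by linarith)
        · exact hfac2
    _ = Real.exp (∑ j ∈ T, x ^ j * (1 - x)⁻¹) := (Real.exp_sum T _).symm
    _ ≤ Real.exp ((1 - x)⁻¹ * (1 - x)⁻¹) := by
        rw [Real.exp_le_exp, ← Finset.sum_mul]
        apply mul_le_mul_of_nonneg_right ?_ (inv_nonneg.mpr h3.le)
        have hsg : Summable (fun j : ℕ => x ^ j) := summable_geometric_of_lt_one h0 h1
        have := Summable.sum_le_tsum T (fun j _ => pow_nonneg h0 j) hsg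
        rwa [tsum_geometric_of_lt_one h0 h1] at this


lemma summable_pc (S : Set ℕ) {q : ℂ} (hq : ‖q‖ < 1) :
    Summable (fun r => ‖(pcount S r : ℂ) * q ^ r‖) := by
  apply Summable.of_nonneg_of_le (fun r => norm_nonneg _) (fun r => ?_)
    (pAll_summable (norm_nonneg q) hq)
  rw [norm_mul, norm_pow, Complex.norm_natCast]
  exact mul_le_mul_of_nonneg_right (Nat.cast_le.mpr (pcount_le S r))
    (pow_nonneg (norm_nonneg q) r)

lemma euler_hasProd (S : Set ℕ) [∀ n : ℕ, Decidable (n ∈ S)] {q : ℂ} (hq : ‖q‖ < 1) :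
    HasProd (fun j => if (j + 1) ∈ S then (1 - q ^ (j + 1))⁻¹ else 1)
      (∑' r, (pcount S r : ℂ) * q ^ r) := by
  rw [HasProd, Metric.tendsto_nhds]
  intro ε hε
  rw [SummationFilter.unconditional_filter, Filter.eventually_atTop]
  set bnd : ℕ → ℝ := fun r => 2 * ((pAll r : ℝ) * ‖q‖ ^ r) with hbnd
  have hbnd0 : ∀ r, 0 ≤ bnd r := fun r => by
    rw [hbnd]
    positivity
  have hsumb : Summable bnd := (pAll_summable (norm_nonneg q) hq).mul_left 2
  have htail := tendsto_sum_nat_add bnd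
  obtain ⟨N, hN⟩ := Filter.eventually_atTop.mp (Metric.tendsto_nhds.mp htail ε hε)
  refine ⟨Finset.range N, fun F hF => ?_⟩
  set T := (F.filter (fun j => (j + 1) ∈ S)).image (· + 1) with hTdef
  have hTpos : ∀ j ∈ T, 0 < j := by
    intro j hj
    rw [hTdef, Finset.mem_image] at hj
    obtain ⟨b, _, rfl⟩ := hj
    omega
  obtain ⟨hsT, heT⟩ := euler_finset hq T hTpos
  have hprodeq : ∏ j ∈ F, (if (j + 1) ∈ S then (1 - q ^ (j + 1))⁻¹ else 1)
      = ∏ j ∈ T, (1 - q ^ j)⁻¹ := by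
    rw [hTdef, Finset.prod_image (fun x _ y _ h => by omega), Finset.prod_filter]
  rw [hprodeq, ← heT]
  have hagree : ∀ r, r ≤ N → pcount (↑T) r = pcount S r := by
    intro r hr
    apply pcount_congr
    intro j hj hjr
    rw [hTdef]
    simp only [Finset.coe_image, Finset.coe_filter, Set.mem_image, Set.mem_setOf_eq]
    constructor
    · rintro ⟨b, ⟨_, hbS⟩, rfl⟩
      exact hbS
    · intro hjS
      refine ⟨j - 1, ⟨?_, ?_⟩, by omega⟩
      · apply hF
        rw [Finset.mem_range]
        omega
      · rw [show j - 1 + 1 = j by omega]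
        exact hjS
  set w : ℕ → ℂ := fun r => (pcount (↑T) r : ℂ) * q ^ r - (pcount S r : ℂ) * q ^ r with hw
  have hsT' : Summable (fun r => (pcount (↑T) r : ℂ) * q ^ r) := hsT.of_norm
  have hsS' : Summable (fun r => (pcount S r : ℂ) * q ^ r) := (summable_pc S hq).of_norm
  rw [dist_eq_norm, ← Summable.tsum_sub hsT' hsS']
  have hwsum : Summable w := hsT'.sub hsS'
  have hzero : ∀ r < N, w r = 0 := by
    intro r hr
    rw [hw]
    simp only
    rw [hagree r hr.le, sub_self]
  have hwnorm : Summable (fun r => ‖w r‖) := by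
    apply Summable.of_nonneg_of_le (fun r => norm_nonneg _) (fun r => norm_sub_le _ _)
      (hsT.add (summable_pc S hq))
  have hwb : ∀ r, ‖w r‖ ≤ bnd r := by
    intro r
    refine (norm_sub_le _ _).trans ?_
    rw [hbnd]
    simp only [norm_mul, norm_pow, Complex.norm_natCast]
    have b1 : ((pcount (↑T) r : ℝ)) ≤ (pAll r : ℝ) := Nat.cast_le.mpr (pcount_le _ r)
    have b2 : ((pcount S r : ℝ)) ≤ (pAll r : ℝ) := Nat.cast_le.mpr (pcount_le _ r)
    have hqr : (0:ℝ) ≤ ‖q‖ ^ r := pow_nonneg (norm_nonneg q) r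
    nlinarith
  calc ‖∑' r, w r‖ = ‖∑' r, w (r + N)‖ := by
        rw [← Summable.sum_add_tsum_nat_add N hwsum,
          Finset.sum_eq_zero (fun r hr => hzero r (Finset.mem_range.mp hr)), zero_add]
    _ ≤ ∑' r, ‖w (r + N)‖ := norm_tsum_le_tsum_norm ((summable_nat_add_iff (f := fun r => ‖w r‖) N).mpr hwnorm)
    _ ≤ ∑' r, bnd (r + N) := by
        apply Summable.tsum_le_tsum (fun r => hwb (r + N)) ((summable_nat_add_iff (f := fun r => ‖w r‖) N).mpr hwnorm)
          ((summable_nat_add_iff (f := bnd) N).mpr hsumb)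
    _ < ε := by
        have := hN N le_rfl
        rwa [dist_zero_right, Real.norm_eq_abs,
          abs_of_nonneg (tsum_nonneg (fun r => hbnd0 (r + N)))] at this


end GordonAux

theorem gen_fun_B (d k i : ℕ) (hd : 1 ≤ d) (hk : 1 ≤ k) (hi1 : 1 ≤ i) (hik : i ≤ k)
    (gordon : ∀ q : ℂ, ‖q‖ < 1 →
      ∑' n : ℕ, (Bcount 1 k i n : ℂ) * q ^ n =
      ∏' j : ℕ, if (j + 1) % (2 * k + 1) = 0 ∨ (j + 1) % (2 * k + 1) = i ∨
          (j + 1) % (2 * k + 1) = 2 * k + 1 - i then 1 else (1 - q ^ (j + 1))⁻¹) :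
    ∀ q : ℂ, ‖q‖ < 1 →
      ∑' n : ℕ, (Bcount d k i n : ℂ) * q ^ n =
      ∏' j : ℕ, if (j + 1) % (d * (2 * k + 1)) = 0 ∨ (j + 1) % (d * (2 * k + 1)) = d * i ∨
          (j + 1) % (d * (2 * k + 1)) = d * (2 * k + 1) - d * i then 1
        else (1 - q ^ (j + 1))⁻¹ := by
  intro q hq
  have hd0 : d ≠ 0 := by omega
  have hdpos : 0 < d := hd
  have hw : ‖q ^ d‖ < 1 := by
    rw [norm_pow]
    calc ‖q‖ ^ d ≤ ‖q‖ := pow_le_of_le_one (norm_nonneg q) hq.le hd0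
      _ < 1 := hq
  have cancel : ∀ a b : ℕ, d * a = d * b ↔ a = b :=
    fun a b => ⟨fun h => Nat.eq_of_mul_eq_mul_left hdpos h, fun h => by rw [h]⟩
  have hmulsub : d * (2 * k + 1) - d * i = d * (2 * k + 1 - i) := by
    have hi : i ≤ 2 * k + 1 := by omega
    obtain ⟨c, hc⟩ := Nat.le.dest hi
    rw [← hc]
    simp [Nat.mul_add, Nat.add_sub_cancel_left]
  haveI inst0 : ∀ n : ℕ, Decidable (n ∈ ({j | ¬ d ∣ j} : Set ℕ)) := fun n => Classical.dec _
  have hA := GordonAux.euler_hasProd {j | ¬ d ∣ j} hq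
  set A := ∑' r, (GordonAux.pcount {j | ¬ d ∣ j} r : ℂ) * q ^ r with hAdef
  set S₁ : Set ℕ :=
    {m | ¬ (m % (2 * k + 1) = 0 ∨ m % (2 * k + 1) = i ∨ m % (2 * k + 1) = 2 * k + 1 - i)}
    with hS₁
  haveI inst1 : ∀ n : ℕ, Decidable (n ∈ S₁) := fun n => Classical.dec _
  have hB := GordonAux.euler_hasProd S₁ hw
  set B := ∑' r, (GordonAux.pcount S₁ r : ℂ) * (q ^ d) ^ r with hBdef
  -- identify B with the Gordon series
  have hBval : ∑' n : ℕ, (Bcount 1 k i n : ℂ) * (q ^ d) ^ n = B := by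
    rw [gordon (q ^ d) hw, ← hB.tprod_eq]
    apply tprod_congr
    intro m
    by_cases hcnd : (m + 1) % (2 * k + 1) = 0 ∨ (m + 1) % (2 * k + 1) = i ∨
        (m + 1) % (2 * k + 1) = 2 * k + 1 - i
    · rw [if_pos hcnd, if_neg (by simp only [hS₁, Set.mem_setOf_eq, not_not]; exact hcnd)]
    · rw [if_neg hcnd, if_pos (by simp only [hS₁, Set.mem_setOf_eq]; exact hcnd)]
  set φ : ℕ → ℂ := fun M => if M ∈ S₁ then (1 - (q ^ d) ^ M)⁻¹ else 1 with hφ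
  have hBφ : HasProd (fun m => φ (m + 1)) B := by
    simpa only [hφ] using hB
  have einj : Function.Injective (fun m : ℕ => d * m + (d - 1)) := by
    intro a b hab
    simp only at hab
    have h2 : d * a = d * b := by omega
    exact (cancel a b).mp h2
  have hh : HasProd (fun j => if d ∣ (j + 1) then φ ((j + 1) / d) else 1) B := by
    rw [← Function.Injective.hasProd_iff einj ?_]
    · have hcompφ : ((fun j => if d ∣ (j + 1) then φ ((j + 1) / d) else 1) ∘
          (fun m : ℕ => d * m + (d - 1))) = fun m => φ (m + 1) := by
        funext m
        have e1 : d * m + (d - 1) + 1 = d * (m + 1) := by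
          have : d * (m + 1) = d * m + d := by ring
          omega
        simp only [Function.comp_apply, e1, if_pos (Dvd.intro (m + 1) rfl),
          Nat.mul_div_cancel_left _ hdpos]
      rw [hcompφ]
      exact hBφ
    · intro j hj
      rw [if_neg]
      rintro ⟨c, hc⟩
      apply hj
      rcases c with _ | c'
      · rw [mul_zero] at hc; omega
      · refine ⟨c', ?_⟩
        have hc2 : d * (c' + 1) = d * c' + d := by ring
        simp only
        omega
  -- factor identity
  have hfactor : ∀ j : ℕ,
      (if (j + 1) ∈ ({j | ¬ d ∣ j} : Set ℕ) then (1 - q ^ (j + 1))⁻¹ else 1) *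
        (if d ∣ (j + 1) then φ ((j + 1) / d) else 1)
      = (if (j + 1) % (d * (2 * k + 1)) = 0 ∨ (j + 1) % (d * (2 * k + 1)) = d * i ∨
          (j + 1) % (d * (2 * k + 1)) = d * (2 * k + 1) - d * i then 1
         else (1 - q ^ (j + 1))⁻¹) := by
    intro j
    by_cases hdvd : d ∣ (j + 1)
    · obtain ⟨M, hM⟩ := hdvd
      have hM1 : 1 ≤ M := by
        rcases M with _ | M'
        · rw [mul_zero] at hM; omega
        · omega
      rw [if_neg (by simp only [Set.mem_setOf_eq, not_not]; exact ⟨M, hM⟩),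
        if_pos ⟨M, hM⟩, one_mul]
      have hdivM : (j + 1) / d = M := by rw [hM, Nat.mul_div_cancel_left M hdpos]
      rw [hdivM]
      have hpow : (q ^ d) ^ M = q ^ (j + 1) := by rw [← pow_mul, ← hM]
      have hmod : (j + 1) % (d * (2 * k + 1)) = d * (M % (2 * k + 1)) := by
        rw [hM, Nat.mul_mod_mul_left]
      have hcongr : ((j + 1) % (d * (2 * k + 1)) = 0 ∨
          (j + 1) % (d * (2 * k + 1)) = d * i ∨
          (j + 1) % (d * (2 * k + 1)) = d * (2 * k + 1) - d * i)
          ↔ (M % (2 * k + 1) = 0 ∨ M % (2 * k + 1) = i ∨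
            M % (2 * k + 1) = 2 * k + 1 - i) := by
        rw [hmod, hmulsub]
        constructor
        · rintro (h | h | h)
          · left; rcases Nat.mul_eq_zero.mp h with h' | h'
            · omega
            · exact h'
          · right; left; exact (cancel _ _).mp h
          · right; right; exact (cancel _ _).mp h
        · rintro (h | h | h)
          · left; rw [h, mul_zero]
          · right; left; rw [h]
          · right; right; rw [h]
      have φval1 : ∀ M : ℕ, M ∉ S₁ → φ M = 1 := fun M h => by
        show (if M ∈ S₁ then (1 - (q ^ d) ^ M)⁻¹ else 1) = 1
        exact if_neg h
      have φval2 : ∀ M : ℕ, M ∈ S₁ → φ M = (1 - (q ^ d) ^ M)⁻¹ := fun M h => by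
        show (if M ∈ S₁ then (1 - (q ^ d) ^ M)⁻¹ else 1) = _
        exact if_pos h
      by_cases hc2 : M % (2 * k + 1) = 0 ∨ M % (2 * k + 1) = i ∨
          M % (2 * k + 1) = 2 * k + 1 - i
      · have hnot : M ∉ S₁ := by
          rw [hS₁]
          simp only [Set.mem_setOf_eq, not_not]
          exact hc2
        rw [φval1 M hnot, if_pos (hcongr.mpr hc2)]
      · have hmem : M ∈ S₁ := by
          rw [hS₁]
          simp only [Set.mem_setOf_eq]
          exact hc2
        rw [φval2 M hmem, if_neg (fun hx => hc2 (hcongr.mp hx)), hpow]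
    · rw [if_pos (by simp only [Set.mem_setOf_eq]; exact hdvd), if_neg hdvd, mul_one]
      rw [if_neg ?_]
      intro hcond
      apply hdvd
      have h3 : d ∣ (j + 1) % (d * (2 * k + 1)) := by
        rcases hcond with h | h | h
        · rw [h]; exact dvd_zero d
        · rw [h]; exact dvd_mul_right d i
        · rw [h, hmulsub]; exact dvd_mul_right d _
      have h4 : d ∣ d * (2 * k + 1) * ((j + 1) / (d * (2 * k + 1))) :=
        (dvd_mul_right d (2 * k + 1)).mul_right _
      have h5 := Nat.div_add_mod (j + 1) (d * (2 * k + 1))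
      rw [← h5]
      exact dvd_add h4 h3
  have hABprod := hA.mul hh
  -- the left-hand side
  set f : ℕ → ℂ := fun u => (if d ∣ u then (Bcount 1 k i (u / d) : ℂ) else 0) * q ^ u with hf
  set g : ℕ → ℂ := fun v => (GordonAux.pcount {j | ¬ d ∣ j} v : ℂ) * q ^ v with hg
  have hginj : Function.Injective (fun m : ℕ => d * m) :=
    fun a b h => (cancel a b).mp h
  have hcomp : (f ∘ fun m : ℕ => d * m) = fun m => (Bcount 1 k i m : ℂ) * (q ^ d) ^ m := by
    funext m
    simp only [Function.comp_apply, hf, if_pos (Dvd.intro m rfl),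
      Nat.mul_div_cancel_left _ hdpos, ← pow_mul]
  have hoff : ∀ u ∉ Set.range (fun m : ℕ => d * m), f u = 0 := by
    intro u hu
    rw [hf]
    simp only
    rw [if_neg, zero_mul]
    rintro ⟨c, hc⟩
    exact hu ⟨c, hc.symm⟩
  have hB1s : Summable (fun m => ‖(Bcount 1 k i m : ℂ) * (q ^ d) ^ m‖) := by
    apply Summable.of_nonneg_of_le (fun _ => norm_nonneg _) (fun m => ?_)
      (GordonAux.pAll_summable (norm_nonneg _) hw)
    simp only [norm_mul, norm_pow, Complex.norm_natCast]
    exact mul_le_mul_of_nonneg_right (Nat.cast_le.mpr (GordonAux.bcount_le k i m))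
      (pow_nonneg (pow_nonneg (norm_nonneg q) d) m)
  have hfsum : HasSum f B := by
    apply (Function.Injective.hasSum_iff hginj hoff).mp
    rw [hcomp, ← hBval]
    exact (hB1s.of_norm).hasSum
  have hfnorm : Summable (fun u => ‖f u‖) := by
    rw [← Function.Injective.summable_iff hginj (fun u hu => by rw [hoff u hu, norm_zero])]
    have e : ((fun u => ‖f u‖) ∘ fun m : ℕ => d * m)
        = fun m => ‖(Bcount 1 k i m : ℂ) * (q ^ d) ^ m‖ := by
      funext m
      show ‖f (d * m)‖ = _
      rw [show f (d * m) = (Bcount 1 k i m : ℂ) * (q ^ d) ^ m from congrFun hcomp m]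
    rw [e]
    exact hB1s
  have hgnorm := GordonAux.summable_pc {j | ¬ d ∣ j} hq
  have hkey : ∀ n : ℕ, (Bcount d k i n : ℂ) * q ^ n
      = ∑ uv ∈ Finset.HasAntidiagonal.antidiagonal n, f uv.1 * g uv.2 := by
    intro n
    rw [GordonAux.bcount_split d k i n hdpos]
    push_cast
    rw [Finset.sum_mul]
    refine Finset.sum_congr rfl fun uv huv => ?_
    have hn := Finset.HasAntidiagonal.mem_antidiagonal.mp huv
    rw [hf, hg]
    simp only
    rw [← hn, pow_add]
    push_cast
    ring
  calc ∑' n : ℕ, (Bcount d k i n : ℂ) * q ^ n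
      = ∑' n : ℕ, ∑ uv ∈ Finset.HasAntidiagonal.antidiagonal n, f uv.1 * g uv.2 := tsum_congr hkey
    _ = (∑' u, f u) * (∑' v, g v) :=
        (tsum_mul_tsum_eq_tsum_sum_antidiagonal_of_summable_norm hfnorm hgnorm).symm
    _ = B * A := by rw [hfsum.tsum_eq]
    _ = A * B := mul_comm B A
    _ = ∏' j : ℕ, _ := (hABprod.tprod_eq).symm.trans (tprod_congr hfactor)
end

section
/- For positive integers d, k and 1 ≤ i ≤ k, Q_{d,k,i}(1,q) = (q^{di}, q^{(2k−i+1)d}, q^{(2k+1)d}; q^{(2k+1)d})_∞ / (q;q)_∞, i.e. upon setting a=1 the series Q becomes an infinite product by Jacobi's triple product identity. -/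
open Filter Finset Complex Topology

/-- The finite q-Pochhammer symbol `(x;q)_n`. -/
noncomputable def qPoch (x q : ℂ) (n : ℕ) : ℂ := ∏ j ∈ Finset.range n, (1 - x * q ^ j)

/-- The infinite q-Pochhammer symbol `(x;q)_∞`. -/
noncomputable def qPochInf (x q : ℂ) : ℂ := ∏' j : ℕ, (1 - x * q ^ j)

lemma one_sub_ne_zero' {u : ℂ} (h : ‖u‖ < 1) : 1 - u ≠ 0 := by
  intro h0
  have : u = 1 := by linear_combination -h0
  simp [this] at h

lemma norm_factor_lt {x q : ℂ} (hx : ‖x‖ < 1) (hq : ‖q‖ < 1) (j : ℕ) : ‖x * q ^ j‖ < 1 := by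
  rw [norm_mul, norm_pow]
  calc ‖x‖ * ‖q‖ ^ j ≤ ‖x‖ * 1 := by
        refine mul_le_mul_of_nonneg_left ?_ (norm_nonneg x)
        exact pow_le_one₀ (norm_nonneg q) hq.le
    _ < 1 := by simpa using hx

lemma factor_ne_zero {x q : ℂ} (hx : ‖x‖ < 1) (hq : ‖q‖ < 1) (j : ℕ) : 1 - x * q ^ j ≠ 0 :=
  one_sub_ne_zero' (norm_factor_lt hx hq j)

lemma qPoch_ne_zero {x q : ℂ} (hx : ‖x‖ < 1) (hq : ‖q‖ < 1) (n : ℕ) : qPoch x q n ≠ 0 :=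
  Finset.prod_ne_zero_iff.2 fun j _ => factor_ne_zero hx hq j

lemma qPoch_succ (x q : ℂ) (n : ℕ) : qPoch x q (n + 1) = qPoch x q n * (1 - x * q ^ n) :=
  Finset.prod_range_succ _ _

lemma summable_log_qPoch {x q : ℂ} (hx : ‖x‖ < 1) (hq : ‖q‖ < 1) :
    Summable fun j : ℕ => Complex.log (1 - x * q ^ j) := by
  apply Summable.of_norm_bounded_eventually_nat (g := fun j => 3/2 * (‖x‖ * ‖q‖ ^ j))
  · exact ((summable_geometric_of_lt_one (norm_nonneg q) hq).mul_left ‖x‖).mul_left _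
  · have h0 : Tendsto (fun j : ℕ => ‖x‖ * ‖q‖ ^ j) atTop (𝓝 (‖x‖ * 0)) :=
      (tendsto_pow_atTop_nhds_zero_of_lt_one (norm_nonneg q) hq).const_mul _
    rw [mul_zero] at h0
    filter_upwards [h0.eventually_le_const (by norm_num : (0:ℝ) < 1/2)] with j hj
    have hz : ‖-(x * q ^ j)‖ ≤ 1/2 := by
      rw [norm_neg, norm_mul, norm_pow]; exact hj
    have := Complex.norm_log_one_add_half_le_self hz
    rw [show (1 : ℂ) + -(x * q ^ j) = 1 - x * q ^ j by ring] at this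
    simpa [norm_mul, norm_pow] using this

lemma qPochInf_hasProd {x q : ℂ} (hx : ‖x‖ < 1) (hq : ‖q‖ < 1) :
    HasProd (fun j : ℕ => 1 - x * q ^ j) (qPochInf x q) := by
  have := (Complex.multipliable_of_summable_log (summable_log_qPoch hx hq)).hasProd
  exact this

lemma qPochInf_ne_zero {x q : ℂ} (hx : ‖x‖ < 1) (hq : ‖q‖ < 1) : qPochInf x q ≠ 0 := by
  have := Complex.cexp_tsum_eq_tprod (f := fun j => 1 - x * q ^ j)
    (fun j => factor_ne_zero hx hq j)
    (summable_log_qPoch hx hq)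
  rw [qPochInf, ← this]
  exact Complex.exp_ne_zero _

lemma qPoch_tendsto {x q : ℂ} (hx : ‖x‖ < 1) (hq : ‖q‖ < 1) :
    Tendsto (fun N => qPoch x q N) atTop (𝓝 (qPochInf x q)) :=
  (qPochInf_hasProd hx hq).tendsto_prod_nat

lemma exists_bounds {u : ℕ → ℂ} (hu : ∀ m, u m ≠ 0) {L : ℂ} (hL : L ≠ 0)
    (h : Tendsto u atTop (𝓝 L)) : ∃ c C : ℝ, 0 < c ∧ (∀ m, c ≤ ‖u m‖) ∧ (∀ m, ‖u m‖ ≤ C) := by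
  have hn : Tendsto (fun m => ‖u m‖) atTop (𝓝 ‖L‖) := h.norm
  have hLp : 0 < ‖L‖ := norm_pos_iff.2 hL
  have hL2 : 0 < ‖L‖ / 2 := by linarith
  have h1 : ∀ᶠ m in atTop, ‖L‖ / 2 < ‖u m‖ := hn.eventually_const_lt (by linarith)
  have h2 : ∀ᶠ m in atTop, ‖u m‖ < ‖L‖ + 1 := hn.eventually_lt_const (by linarith)
  obtain ⟨M, hM⟩ := (h1.and h2).exists_forall_of_atTop
  have hne : (Finset.range (M + 1)).Nonempty := ⟨0, by simp⟩
  refine ⟨min (‖L‖/2) ((Finset.range (M+1)).inf' hne fun m => ‖u m‖),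
    max (‖L‖ + 1) ((Finset.range (M+1)).sup' hne fun m => ‖u m‖), ?_, ?_, ?_⟩
  · apply lt_min hL2
    obtain ⟨m, _, hm⟩ := Finset.exists_mem_eq_inf' hne fun m => ‖u m‖
    rw [hm]; exact norm_pos_iff.2 (hu m)
  · intro m
    rcases le_or_gt m M with hm | hm
    · exact le_trans (min_le_right _ _) (Finset.inf'_le _ (by simp; omega))
    · exact le_trans (min_le_left _ _) (hM m hm.le).1.le
  · intro m
    rcases le_or_gt m M with hm | hm
    · exact le_trans (Finset.le_sup' (fun m => ‖u m‖) (by simp; omega)) (le_max_right _ _)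
    · exact le_trans (hM m hm.le).2.le (le_max_left _ _)

lemma qPoch_zero (x q : ℂ) : qPoch x q 0 = 1 := rfl

lemma tri_eq (n : ℕ) : n * (n - 1) / 2 = ∑ i ∈ range n, i := (Finset.sum_range_id n).symm

lemma tri_succ (n : ℕ) : (n + 1) * n / 2 = n * (n - 1) / 2 + n := by
  rw [show (n+1) * n = (n+1) * ((n+1) - 1) by simp, tri_eq, tri_eq, Finset.sum_range_succ]

noncomputable def qb (q : ℂ) (M r : ℕ) : ℂ :=
  if r ≤ M then qPoch q q M / (qPoch q q r * qPoch q q (M - r)) else 0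

lemma qb_of_le {q : ℂ} {M r : ℕ} (h : r ≤ M) :
    qb q M r = qPoch q q M / (qPoch q q r * qPoch q q (M - r)) := if_pos h

lemma qb_of_gt {q : ℂ} {M r : ℕ} (h : M < r) : qb q M r = 0 := if_neg (by omega)

lemma qb_zero {q : ℂ} (hq : ‖q‖ < 1) (M : ℕ) : qb q M 0 = 1 := by
  rw [qb_of_le (Nat.zero_le M), qPoch_zero, one_mul, Nat.sub_zero,
    div_self (qPoch_ne_zero hq hq M)]

lemma qb_self {q : ℂ} (hq : ‖q‖ < 1) (M : ℕ) : qb q M M = 1 := by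
  rw [qb_of_le le_rfl, Nat.sub_self, qPoch_zero, mul_one, div_self (qPoch_ne_zero hq hq M)]

lemma qb_symm {q : ℂ} {M r : ℕ} (h : r ≤ M) : qb q M (M - r) = qb q M r := by
  rw [qb_of_le (Nat.sub_le M r), qb_of_le h, Nat.sub_sub_self h, mul_comm]

lemma qb_pascal {q : ℂ} (hq : ‖q‖ < 1) {M n : ℕ} (hnM : n ≤ M) :
    qb q (M + 1) (n + 1) = qb q M (n + 1) + q ^ (M - n) * qb q M n := by
  rcases eq_or_lt_of_le hnM with rfl | hlt
  · rw [qb_self hq, qb_self hq, qb_of_gt (by omega), Nat.sub_self, pow_zero]; ring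
  · obtain ⟨j, rfl⟩ : ∃ j, M = n + 1 + j := ⟨M - (n+1), by omega⟩
    rw [qb_of_le (by omega), qb_of_le (by omega), qb_of_le (by omega)]
    rw [show n + 1 + j + 1 - (n + 1) = j + 1 by omega,
      show n + 1 + j - (n + 1) = j by omega, show n + 1 + j - n = j + 1 by omega]
    rw [qPoch_succ q q (n + 1 + j), qPoch_succ q q n, qPoch_succ q q j]
    have h1 := qPoch_ne_zero hq hq n
    have h2 := qPoch_ne_zero hq hq j
    have h3 := factor_ne_zero hq hq n
    have h4 := factor_ne_zero hq hq j
    field_simp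
    ring

lemma gauss {q : ℂ} (hq : ‖q‖ < 1) (x : ℂ) (M : ℕ) :
    ∏ j ∈ range M, (1 + x * q ^ j) =
      ∑ n ∈ range (M + 1), qb q M n * q ^ (n * (n - 1) / 2) * x ^ n := by
  induction M with
  | zero => simp [qb_zero hq]
  | succ M ih =>
    rw [Finset.prod_range_succ, ih, mul_one_add]
    have hlast : qb q M (M + 1) * q ^ ((M+1) * (M+1-1) / 2) * x ^ (M+1) = 0 := by
      rw [qb_of_gt (by omega)]; ring
    have hext : ∑ n ∈ range M, qb q M (n+1) * q ^ ((n+1) * (n+1-1) / 2) * x ^ (n+1)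
        = ∑ n ∈ range (M+1), qb q M (n+1) * q ^ ((n+1) * (n+1-1) / 2) * x ^ (n+1) := by
      rw [Finset.sum_range_succ, hlast, add_zero]
    have hmul : (∑ n ∈ range (M+1), qb q M n * q ^ (n * (n - 1) / 2) * x ^ n) * (x * q ^ M)
        = ∑ n ∈ range (M+1), q ^ M * qb q M n * q ^ (n * (n - 1) / 2) * x ^ (n+1) := by
      rw [Finset.sum_mul]; apply Finset.sum_congr rfl; intro n _; ring
    rw [hmul]
    rw [Finset.sum_range_succ' (fun n => qb q (M+1) n * q ^ (n * (n - 1) / 2) * x ^ n) (M+1)]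
    rw [Finset.sum_range_succ' (fun n => qb q M n * q ^ (n * (n - 1) / 2) * x ^ n) M, hext]
    rw [add_right_comm, qb_zero hq, qb_zero hq, add_left_inj, ← Finset.sum_add_distrib]
    apply Finset.sum_congr rfl
    intro n hn
    have hn' : n ≤ M := by simpa using Nat.lt_succ_iff.mp (Finset.mem_range.mp hn)
    rw [qb_pascal hq hn']
    have hexp : q ^ (M - n) * q ^ ((n+1) * (n+1-1) / 2) = q ^ (n * (n - 1) / 2) * q ^ M := by
      rw [← pow_add, ← pow_add]
      congr 1
      have := tri_succ n
      simp only [Nat.add_sub_cancel] at *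
      omega
    linear_combination (-(qb q M n) * x^(n+1)) * hexp

lemma htwo (n : ℕ) : n * (n - 1) / 2 * 2 = n * n - n := by
  rw [tri_eq, Finset.sum_range_id_mul_two]
  cases n with
  | zero => simp
  | succ m => simp only [Nat.add_sub_cancel]
              have : (m+1)*m + (m+1) = (m+1)*(m+1) := by ring
              omega

lemma hsq (n : ℕ) : n ≤ n * n := by nlinarith

lemma NI1 {N t : ℕ} (ht : t ≤ N) :
    (N + t) * (N + t - 1) / 2 + (2 * N * N - N * (N + t)) =
      N * (N - 1) / 2 + N * N + t * (t - 1) / 2 := by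
  have h1 := htwo (N + t); have h2 := htwo N; have h3 := htwo t
  have hle : N * (N + t) ≤ 2 * N * N := by nlinarith
  zify [hle, hsq (N + t), hsq N, hsq t] at h1 h2 h3 ⊢
  nlinarith [h1, h2, h3]

lemma NI2 {N s : ℕ} (hs : s < N) :
    (N - s - 1) * (N - s - 1 - 1) / 2 + (2 * N * N - N * (N - s - 1)) =
      N * (N - 1) / 2 + N * N + ((s + 1) * s / 2 + (s + 1)) := by
  obtain ⟨m, rfl⟩ : ∃ m, N = s + 1 + m := ⟨N - s - 1, by omega⟩
  rw [show s + 1 + m - s - 1 = m by omega]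
  have h1 := htwo m; have h2 := htwo (s + 1 + m)
  have h3 := htwo (s + 1)
  rw [show (s + 1) * (s + 1 - 1) = (s + 1) * s by simp] at h3
  have hle : (s + 1 + m) * m ≤ 2 * (s + 1 + m) * (s + 1 + m) := by nlinarith
  zify [hle, hsq m, hsq (s + 1 + m), hsq (s + 1)] at h1 h2 h3 ⊢
  nlinarith [h1, h2, h3]

lemma NI3 {N m : ℕ} (hm : m ≤ 2 * N) : N * m + (2 * N * N - N * m) = 2 * N * N := by
  have : N * m ≤ 2 * N * N := by nlinarith
  omega


lemma fin_jtp {q z w : ℂ} (hq : ‖q‖ < 1) (hq0 : q ≠ 0) (hw0 : w ≠ 0)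
    (hzw : z * w = q) (N : ℕ) :
    qPoch z q N * qPoch w q N =
      (∑ t ∈ range (N + 1),
        qb q (2 * N) (N + t) * (-1 : ℂ) ^ t * q ^ (t * (t - 1) / 2) * w ^ t) +
      ∑ s ∈ range N,
        qb q (2 * N) (N + (s + 1)) * (-1 : ℂ) ^ (s + 1) * q ^ ((s + 1) * s / 2) * z ^ (s + 1) := by
  have hqN : q ^ N ≠ 0 := pow_ne_zero _ hq0
  set x : ℂ := -w * (q ^ N)⁻¹ with hx
  have hA : ∀ j : ℕ, q ^ N * (1 + x * q ^ j) = q ^ N - w * q ^ j := by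
    intro j; rw [hx]; field_simp; ring
  have hprodA : q ^ (2 * N * N) * ∏ j ∈ range (2 * N), (1 + x * q ^ j) =
      ∏ j ∈ range (2 * N), (q ^ N - w * q ^ j) := by
    calc q ^ (2 * N * N) * ∏ j ∈ range (2 * N), (1 + x * q ^ j)
        = (∏ _j ∈ range (2 * N), q ^ N) * ∏ j ∈ range (2 * N), (1 + x * q ^ j) := by
          rw [Finset.prod_const, Finset.card_range, ← pow_mul]
          congr 2
          ring
      _ = ∏ j ∈ range (2 * N), (q ^ N * (1 + x * q ^ j)) := Finset.prod_mul_distrib.symm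
      _ = _ := Finset.prod_congr rfl fun j _ => hA j
  have hsplit : ∏ j ∈ range (2 * N), (q ^ N - w * q ^ j) =
      (∏ j ∈ range N, (q ^ N - w * q ^ j)) * ∏ j ∈ range N, (q ^ N - w * q ^ (N + j)) := by
    rw [show 2 * N = N + N by ring, Finset.prod_range_add]
  have hB2 : ∏ j ∈ range N, (q ^ N - w * q ^ (N + j)) = q ^ (N * N) * qPoch w q N := by
    calc ∏ j ∈ range N, (q ^ N - w * q ^ (N + j))
        = ∏ j ∈ range N, (q ^ N * (1 - w * q ^ j)) :=
          Finset.prod_congr rfl fun j _ => by rw [pow_add]; ring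
      _ = _ := by
          rw [Finset.prod_mul_distrib, Finset.prod_const, Finset.card_range, ← pow_mul, qPoch]
  have hB1 : ∏ j ∈ range N, (q ^ N - w * q ^ j) =
      (-1 : ℂ) ^ N * w ^ N * q ^ (N * (N - 1) / 2) * qPoch z q N := by
    rw [← Finset.prod_range_reflect (fun j => q ^ N - w * q ^ j) N]
    have hfac : ∀ j ∈ range N, q ^ N - w * q ^ (N - 1 - j) =
        (-1 : ℂ) * (w * q ^ (N - 1 - j)) * (1 - z * q ^ j) := by
      intro j hj; rw [mem_range] at hj
      obtain ⟨m, rfl⟩ : ∃ m, N = j + 1 + m := ⟨N - j - 1, by omega⟩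
      rw [show j + 1 + m - 1 - j = m by omega, show j + 1 + m = (j + m) + 1 by ring,
        pow_succ, ← hzw]
      ring
    rw [Finset.prod_congr rfl hfac, Finset.prod_mul_distrib, Finset.prod_mul_distrib,
      Finset.prod_mul_distrib, Finset.prod_const, Finset.prod_const, Finset.card_range,
      Finset.prod_pow_eq_pow_sum, Finset.sum_range_reflect (fun j => j) N, ← tri_eq, qPoch]
    ring
  have hG := gauss hq x (2 * N)
  have key : ((-1 : ℂ) ^ N * w ^ N * q ^ (N * (N - 1) / 2) * qPoch z q N) *
      (q ^ (N * N) * qPoch w q N) =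
      ∑ m ∈ range (2 * N + 1),
        qb q (2 * N) m * (-1 : ℂ) ^ m * w ^ m * q ^ (m * (m - 1) / 2 + (2 * N * N - N * m)) := by
    rw [← hB1, ← hB2, ← hsplit, ← hprodA, hG, Finset.mul_sum]
    apply Finset.sum_congr rfl
    intro m hm; rw [mem_range] at hm
    have hm' : m ≤ 2 * N := by omega
    have hle : N * m ≤ 2 * N * N := by nlinarith
    have hxm : x ^ m = (-1 : ℂ) ^ m * w ^ m * (q ^ (N * m))⁻¹ := by
      rw [hx, mul_pow, inv_pow, ← pow_mul, neg_pow]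
    have hq2 : q ^ (2 * N * N) * (q ^ (N * m))⁻¹ = q ^ (2 * N * N - N * m) := by
      rw [eq_comm, inv_eq_one_div, mul_one_div, eq_div_iff (pow_ne_zero _ hq0),
        ← pow_add, Nat.sub_add_cancel hle]
    rw [hxm]
    calc q ^ (2 * N * N) * (qb q (2 * N) m * q ^ (m * (m - 1) / 2) *
          ((-1 : ℂ) ^ m * w ^ m * (q ^ (N * m))⁻¹))
        = qb q (2 * N) m * (-1 : ℂ) ^ m * w ^ m *
          (q ^ (m * (m - 1) / 2) * (q ^ (2 * N * N) * (q ^ (N * m))⁻¹)) := by ring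
      _ = _ := by rw [hq2, ← pow_add]
  have hc : ((-1 : ℂ) ^ N * w ^ N * q ^ (N * (N - 1) / 2 + N * N)) ≠ 0 := by
    exact mul_ne_zero (mul_ne_zero (pow_ne_zero _ (by norm_num)) (pow_ne_zero _ hw0))
      (pow_ne_zero _ hq0)
  apply mul_left_cancel₀ hc
  have hL : (-1 : ℂ) ^ N * w ^ N * q ^ (N * (N - 1) / 2 + N * N) *
      (qPoch z q N * qPoch w q N) =
      ((-1 : ℂ) ^ N * w ^ N * q ^ (N * (N - 1) / 2) * qPoch z q N) *
      (q ^ (N * N) * qPoch w q N) := by rw [pow_add]; ring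
  rw [hL, key, show 2 * N + 1 = N + (N + 1) by ring, Finset.sum_range_add]
  have hHigh : ∑ t ∈ range (N + 1),
      qb q (2 * N) (N + t) * (-1 : ℂ) ^ (N + t) * w ^ (N + t) *
        q ^ ((N + t) * (N + t - 1) / 2 + (2 * N * N - N * (N + t))) =
      (-1 : ℂ) ^ N * w ^ N * q ^ (N * (N - 1) / 2 + N * N) *
        ∑ t ∈ range (N + 1), qb q (2 * N) (N + t) * (-1 : ℂ) ^ t * q ^ (t * (t - 1) / 2) * w ^ t := by
    rw [Finset.mul_sum]
    apply Finset.sum_congr rfl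
    intro t ht; rw [mem_range] at ht
    have ht' : t ≤ N := by omega
    rw [NI1 ht', pow_add (-1 : ℂ), pow_add w, pow_add q (N * (N - 1) / 2 + N * N), pow_add q]
    ring
  have hLow : ∑ j ∈ range N,
      qb q (2 * N) j * (-1 : ℂ) ^ j * w ^ j *
        q ^ (j * (j - 1) / 2 + (2 * N * N - N * j)) =
      (-1 : ℂ) ^ N * w ^ N * q ^ (N * (N - 1) / 2 + N * N) *
        ∑ s ∈ range N,
          qb q (2 * N) (N + (s + 1)) * (-1 : ℂ) ^ (s + 1) * q ^ ((s + 1) * s / 2) * z ^ (s + 1) := by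
    rw [← Finset.sum_range_reflect
      (fun j => qb q (2 * N) j * (-1 : ℂ) ^ j * w ^ j *
        q ^ (j * (j - 1) / 2 + (2 * N * N - N * j))) N, Finset.mul_sum]
    apply Finset.sum_congr rfl
    intro s hs; rw [mem_range] at hs
    have hqb : qb q (2 * N) (N - 1 - s) = qb q (2 * N) (N + (s + 1)) := by
      rw [show N - 1 - s = 2 * N - (N + (s + 1)) by omega]
      exact qb_symm (by omega)
    have hexp : (N - 1 - s) * (N - 1 - s - 1) / 2 + (2 * N * N - N * (N - 1 - s)) =
        N * (N - 1) / 2 + N * N + ((s + 1) * s / 2 + (s + 1)) := by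
      have := NI2 hs
      rw [show N - s - 1 = N - 1 - s by omega] at this
      exact this
    rw [hqb, hexp]
    obtain ⟨m, rfl⟩ : ∃ m, N = s + 1 + m := ⟨N - s - 1, by omega⟩
    rw [show s + 1 + m - 1 - s = m by omega]
    have hzp : z ^ (s + 1) * w ^ (s + 1) = q ^ (s + 1) := by rw [← mul_pow, hzw]
    rw [pow_add q (((s+1+m) * (s+1+m - 1) / 2 + (s+1+m) * (s+1+m))) ((s + 1) * s / 2 + (s + 1)),
      pow_add q ((s + 1) * s / 2) (s + 1), ← hzp]
    rw [show s + 1 + m = m + (s + 1) by ring, pow_add (-1 : ℂ) m (s + 1), pow_add w m (s + 1)]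
    ring_nf
    rw [show (-1 : ℂ) ^ (s * 2) = 1 by rw [mul_comm, pow_mul]; norm_num, mul_one]
  rw [hHigh, hLow]
  ring

lemma jtp {q z w : ℂ} (hq : ‖q‖ < 1) (hz : ‖z‖ < 1) (hw : ‖w‖ < 1) (hq0 : q ≠ 0)
    (hw0 : w ≠ 0) (hzw : z * w = q) :
    ∑' n : ℕ, ((-1 : ℂ) ^ n * q ^ (n * (n - 1) / 2) * w ^ n +
      (-1 : ℂ) ^ (n + 1) * q ^ ((n + 1) * n / 2) * z ^ (n + 1)) =
    qPochInf z q * qPochInf w q * qPochInf q q := by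
  have hP0 : qPochInf q q ≠ 0 := qPochInf_ne_zero hq hq
  have hPt : Tendsto (fun N => qPoch q q N) atTop (𝓝 (qPochInf q q)) := qPoch_tendsto hq hq
  obtain ⟨c, C, hc, hcle, hCle⟩ := exists_bounds (fun m => qPoch_ne_zero hq hq m) hP0 hPt
  have hC0 : (0 : ℝ) ≤ C := le_trans (norm_nonneg _) (hCle 0)
  set P := qPochInf q q with hP
  set F : ℕ → ℕ → ℂ := fun N n =>
    (if n ≤ N then qb q (2 * N) (N + n) else 0) * ((-1 : ℂ) ^ n * q ^ (n * (n - 1) / 2) * w ^ n) +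
    (if n + 1 ≤ N then qb q (2 * N) (N + (n + 1)) else 0) *
      ((-1 : ℂ) ^ (n + 1) * q ^ ((n + 1) * n / 2) * z ^ (n + 1)) with hF
  -- Step 1 : each row sums to the finite product
  have step1 : ∀ N, ∑' n, F N n = qPoch z q N * qPoch w q N := by
    intro N
    have hsupp : ∀ n ∉ Finset.range (N + 1), F N n = 0 := by
      intro n hn
      rw [Finset.mem_range] at hn
      simp only [hF, if_neg (by omega : ¬ n ≤ N), if_neg (by omega : ¬ n + 1 ≤ N),
        zero_mul, add_zero]
    rw [tsum_eq_sum hsupp, fin_jtp hq hq0 hw0 hzw N]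
    simp only [hF]
    rw [Finset.sum_add_distrib]
    congr 1
    · apply Finset.sum_congr rfl
      intro t ht
      rw [Finset.mem_range] at ht
      rw [if_pos (by omega : t ≤ N)]
      ring
    · rw [Finset.sum_range_succ, if_neg (by omega : ¬ N + 1 ≤ N), zero_mul, add_zero]
      apply Finset.sum_congr rfl
      intro s hs
      rw [Finset.mem_range] at hs
      rw [if_pos (by omega : s + 1 ≤ N)]
      ring
  -- limit of the q-binomial coefficients
  have hqblim : ∀ n : ℕ, Tendsto (fun N => qb q (2 * N) (N + n)) atTop (𝓝 P⁻¹) := by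
    intro n
    have h2N : Tendsto (fun N : ℕ => qPoch q q (2 * N)) atTop (𝓝 P) :=
      hPt.comp (tendsto_atTop_mono (fun N => by
        simpa using Nat.le_mul_of_pos_left N (by norm_num : 0 < 2)) tendsto_id)
    have hNn : Tendsto (fun N : ℕ => qPoch q q (N + n)) atTop (𝓝 P) :=
      hPt.comp (tendsto_atTop_mono (fun N => by simpa using Nat.le_add_right N n) tendsto_id)
    have hNn' : Tendsto (fun N : ℕ => qPoch q q (N - n)) atTop (𝓝 P) :=
      hPt.comp (tendsto_sub_atTop_nat n)
    have hlim : Tendsto (fun N : ℕ => qPoch q q (2 * N) /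
        (qPoch q q (N + n) * qPoch q q (N - n))) atTop (𝓝 (P / (P * P))) :=
      h2N.div (hNn.mul hNn') (mul_ne_zero hP0 hP0)
    have heq : (fun N : ℕ => qPoch q q (2 * N) / (qPoch q q (N + n) * qPoch q q (N - n)))
        =ᶠ[atTop] fun N => qb q (2 * N) (N + n) := by
      filter_upwards [eventually_ge_atTop n] with N hN
      rw [qb_of_le (by omega), show 2 * N - (N + n) = N - n by omega]
    have : P / (P * P) = P⁻¹ := by field_simp
    exact this ▸ hlim.congr' heq
  -- Step 2 : pointwise limit of rows
  have step2 : ∀ n : ℕ, Tendsto (fun N => F N n) atTop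
      (𝓝 (P⁻¹ * ((-1 : ℂ) ^ n * q ^ (n * (n - 1) / 2) * w ^ n) +
        P⁻¹ * ((-1 : ℂ) ^ (n + 1) * q ^ ((n + 1) * n / 2) * z ^ (n + 1)))) := by
    intro n
    have hlim := ((hqblim n).mul_const ((-1 : ℂ) ^ n * q ^ (n * (n - 1) / 2) * w ^ n)).add
      ((hqblim (n + 1)).mul_const ((-1 : ℂ) ^ (n + 1) * q ^ ((n + 1) * n / 2) * z ^ (n + 1)))
    apply hlim.congr'
    filter_upwards [eventually_ge_atTop (n + 1)] with N hN
    simp only [hF, if_pos (by omega : n ≤ N), if_pos (by omega : n + 1 ≤ N)]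
  -- Step 3 : uniform bound
  have hqbb : ∀ M r : ℕ, ‖qb q M r‖ ≤ C / (c * c) := by
    intro M r
    rw [qb]
    split_ifs with h
    · rw [norm_div, norm_mul]
      exact div_le_div₀ hC0 (hCle M) (by positivity)
        (mul_le_mul (hcle r) (hcle (M - r)) hc.le (le_trans hc.le (hcle r)))
    · rw [norm_zero]; positivity
  have step3 : ∀ N n, ‖F N n‖ ≤ C / (c * c) * (‖w‖ ^ n + ‖z‖ ^ (n + 1)) := by
    intro N n
    have hb : ∀ (b : ℂ) (M r : ℕ), ‖if b = b then qb q M r else 0‖ ≤ C / (c * c) := fun _ _ _ => by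
      rw [if_pos rfl]; exact hqbb _ _
    have h1 : ‖(if n ≤ N then qb q (2 * N) (N + n) else 0)‖ ≤ C / (c * c) := by
      split_ifs with h
      · exact hqbb _ _
      · rw [norm_zero]; positivity
    have h2 : ‖(if n + 1 ≤ N then qb q (2 * N) (N + (n + 1)) else 0)‖ ≤ C / (c * c) := by
      split_ifs with h
      · exact hqbb _ _
      · rw [norm_zero]; positivity
    have hA : ‖(-1 : ℂ) ^ n * q ^ (n * (n - 1) / 2) * w ^ n‖ ≤ ‖w‖ ^ n := by
      rw [norm_mul, norm_mul, norm_pow, norm_pow, norm_pow, norm_neg, norm_one, one_pow, one_mul]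
      calc ‖q‖ ^ (n * (n - 1) / 2) * ‖w‖ ^ n ≤ 1 * ‖w‖ ^ n := by
            apply mul_le_mul_of_nonneg_right (pow_le_one₀ (norm_nonneg q) hq.le) (by positivity)
        _ = ‖w‖ ^ n := one_mul _
    have hB : ‖(-1 : ℂ) ^ (n + 1) * q ^ ((n + 1) * n / 2) * z ^ (n + 1)‖ ≤ ‖z‖ ^ (n + 1) := by
      rw [norm_mul, norm_mul, norm_pow, norm_pow, norm_pow, norm_neg, norm_one, one_pow, one_mul]
      calc ‖q‖ ^ ((n + 1) * n / 2) * ‖z‖ ^ (n + 1) ≤ 1 * ‖z‖ ^ (n + 1) := by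
            apply mul_le_mul_of_nonneg_right (pow_le_one₀ (norm_nonneg q) hq.le) (by positivity)
        _ = ‖z‖ ^ (n + 1) := one_mul _
    calc ‖F N n‖ ≤ ‖(if n ≤ N then qb q (2 * N) (N + n) else 0) *
          ((-1 : ℂ) ^ n * q ^ (n * (n - 1) / 2) * w ^ n)‖ +
          ‖(if n + 1 ≤ N then qb q (2 * N) (N + (n + 1)) else 0) *
          ((-1 : ℂ) ^ (n + 1) * q ^ ((n + 1) * n / 2) * z ^ (n + 1))‖ := norm_add_le _ _
      _ ≤ C / (c * c) * ‖w‖ ^ n + C / (c * c) * ‖z‖ ^ (n + 1) :=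
          add_le_add
            (by rw [norm_mul]; exact mul_le_mul h1 hA (norm_nonneg _) (by positivity))
            (by rw [norm_mul]; exact mul_le_mul h2 hB (norm_nonneg _) (by positivity))
      _ = C / (c * c) * (‖w‖ ^ n + ‖z‖ ^ (n + 1)) := by ring
  have hbsum : Summable (fun n : ℕ => C / (c * c) * (‖w‖ ^ n + ‖z‖ ^ (n + 1))) := by
    apply Summable.mul_left
    apply Summable.add (summable_geometric_of_lt_one (norm_nonneg w) hw)
    exact ((summable_geometric_of_lt_one (norm_nonneg z) hz).mul_left ‖z‖).congr
      (fun n => by rw [← pow_succ'])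
  -- dominated convergence
  have hdom := tendsto_tsum_of_dominated_convergence hbsum step2
    (Filter.Eventually.of_forall fun N => fun n => step3 N n)
  have hfin : Tendsto (fun N => ∑' n, F N n) atTop (𝓝 (qPochInf z q * qPochInf w q)) := by
    have := (qPoch_tendsto hz hq).mul (qPoch_tendsto hw hq)
    exact (funext step1 : (fun N => ∑' n, F N n) = _) ▸ this
  have huniq := tendsto_nhds_unique hdom hfin
  -- rearrange
  have hsum : ∑' n : ℕ, (P⁻¹ * ((-1 : ℂ) ^ n * q ^ (n * (n - 1) / 2) * w ^ n) +
      P⁻¹ * ((-1 : ℂ) ^ (n + 1) * q ^ ((n + 1) * n / 2) * z ^ (n + 1))) =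
      P⁻¹ * ∑' n : ℕ, ((-1 : ℂ) ^ n * q ^ (n * (n - 1) / 2) * w ^ n +
      (-1 : ℂ) ^ (n + 1) * q ^ ((n + 1) * n / 2) * z ^ (n + 1)) := by
    rw [← tsum_mul_left]
    apply tsum_congr
    intro n
    ring
  rw [hsum] at huniq
  have h2 : ∑' n : ℕ, ((-1 : ℂ) ^ n * q ^ (n * (n - 1) / 2) * w ^ n +
      (-1 : ℂ) ^ (n + 1) * q ^ ((n + 1) * n / 2) * z ^ (n + 1)) =
      P * (qPochInf z q * qPochInf w q) := by
    have h3 := congrArg (fun t => P * t) huniq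
    simpa [← mul_assoc, mul_inv_cancel₀ hP0] using h3
  rw [h2, hP]
  ring

/-- `Q_{d,k,i}(a,q)`; note the exponent
`(dk+d/2)n² + (k−i+1/2)dn = d((2k+1)n(n+1)/2 − in)`. -/
noncomputable def Q (d k i : ℕ) (a q : ℂ) : ℂ :=
  (qPochInf (a * q) q)⁻¹ *
    ∑' n : ℕ, (-1) ^ n * a ^ (k * n) * q ^ (d * ((2 * k + 1) * n * (n + 1) / 2 - i * n)) *
      (1 - a ^ i * q ^ ((2 * n + 1) * d * i)) * qPoch (a * q ^ d) (q ^ d) n /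
      qPoch (q ^ d) (q ^ d) n

lemma qPochInf_zero_left (q : ℂ) : qPochInf 0 q = 1 := by simp [qPochInf]

lemma E1 {d k i : ℕ} (hik : i ≤ k) (n : ℕ) :
    d * ((2 * k + 1) * n * (n + 1) / 2 - i * n) =
      (2 * k + 1) * d * (n * (n - 1) / 2) + (2 * k - i + 1) * d * n := by
  have hdvd : 2 ∣ n * (n + 1) := (Nat.even_mul_succ_self n).two_dvd
  have hassoc : (2 * k + 1) * n * (n + 1) / 2 = (2 * k + 1) * (n * (n + 1) / 2) := by
    rw [mul_assoc, Nat.mul_div_assoc _ hdvd]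
  have htri : n * (n + 1) / 2 = n * (n - 1) / 2 + n := by
    rw [mul_comm n (n + 1)]; exact tri_succ n
  rw [hassoc, htri]
  have h3 : 2 * k - i + 1 + i = 2 * k + 1 := by omega
  have h2 : (2 * k + 1) * (n * (n - 1) / 2 + n) =
      ((2 * k + 1) * (n * (n - 1) / 2) + (2 * k - i + 1) * n) + i * n := by
    calc (2 * k + 1) * (n * (n - 1) / 2 + n)
        = (2 * k + 1) * (n * (n - 1) / 2) + (2 * k - i + 1 + i) * n := by rw [h3]; ring
      _ = _ := by ring
  rw [h2, Nat.add_sub_cancel]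
  ring

lemma E2 {d k i : ℕ} (hik : i ≤ k) (n : ℕ) :
    d * ((2 * k + 1) * n * (n + 1) / 2 - i * n) + (2 * n + 1) * d * i =
      (2 * k + 1) * d * ((n + 1) * n / 2) + d * i * (n + 1) := by
  rw [E1 hik, tri_succ n]
  have h3 : 2 * k - i + 1 + i = 2 * k + 1 := by omega
  calc (2 * k + 1) * d * (n * (n - 1) / 2) + (2 * k - i + 1) * d * n + (2 * n + 1) * d * i
      = (2 * k + 1) * d * (n * (n - 1) / 2) + (2 * k - i + 1 + i) * d * n + d * i * (n + 1) := by
        ring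
    _ = _ := by rw [h3]; ring

theorem Q_at_one (d k i : ℕ) (hd : 0 < d) (hk : 0 < k) (hi1 : 1 ≤ i) (hik : i ≤ k)
    (q : ℂ) (hq : ‖q‖ < 1) :
    Q d k i 1 q =
      qPochInf (q ^ (d * i)) (q ^ ((2 * k + 1) * d)) *
        qPochInf (q ^ ((2 * k - i + 1) * d)) (q ^ ((2 * k + 1) * d)) *
        qPochInf (q ^ ((2 * k + 1) * d)) (q ^ ((2 * k + 1) * d)) /
      qPochInf q q := by
  by_cases hq0 : q = 0
  · subst hq0
    have hdi : 0 < d * i := by positivity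
    have hkd : 0 < (2 * k + 1) * d := by positivity
    have hkd2 : 0 < (2 * k - i + 1) * d := by
      have : 0 < 2 * k - i + 1 := by omega
      positivity
    rw [Q, show ((1 : ℂ) * 0) = 0 by ring,
      zero_pow (by omega : d * i ≠ 0), zero_pow (by omega : (2 * k + 1) * d ≠ 0),
      zero_pow (by omega : (2 * k - i + 1) * d ≠ 0), qPochInf_zero_left]
    have hterm : ∀ n : ℕ, n ≠ 0 → ((-1 : ℂ)) ^ n * (1 : ℂ) ^ (k * n) *
        (0 : ℂ) ^ (d * ((2 * k + 1) * n * (n + 1) / 2 - i * n)) *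
        (1 - (1 : ℂ) ^ i * (0 : ℂ) ^ ((2 * n + 1) * d * i)) *
        qPoch (1 * (0 : ℂ) ^ d) ((0 : ℂ) ^ d) n / qPoch ((0 : ℂ) ^ d) ((0 : ℂ) ^ d) n = 0 := by
      intro n hn
      have hpos : 0 < (2 * k + 1) * n * (n + 1) / 2 - i * n := by
        have h1 : i * n + n ≤ (2 * k + 1) * n * (n + 1) / 2 := by
          have hdvd : 2 ∣ n * (n + 1) := (Nat.even_mul_succ_self n).two_dvd
          have hassoc : (2 * k + 1) * n * (n + 1) / 2 = (2 * k + 1) * (n * (n + 1) / 2) := by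
            rw [mul_assoc, Nat.mul_div_assoc _ hdvd]
          have htri : n * (n + 1) / 2 = n * (n - 1) / 2 + n := by
            rw [mul_comm n (n + 1)]; exact tri_succ n
          rw [hassoc, htri]
          have h5 : i * n + n ≤ (2 * k + 1) * n := by nlinarith [Nat.one_le_iff_ne_zero.2 hn]
          exact le_trans h5 (Nat.mul_le_mul_left _ (Nat.le_add_left n _))
        omega
      rw [zero_pow (Nat.mul_ne_zero (by omega) (by omega) :
        d * ((2 * k + 1) * n * (n + 1) / 2 - i * n) ≠ 0)]
      ring
    rw [tsum_eq_single 0 hterm]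
    have h0 : qPoch ((0 : ℂ) ^ d) ((0 : ℂ) ^ d) 0 = 1 := qPoch_zero _ _
    have hne : (2 * 0 + 1) * d * i ≠ 0 := by
      simpa using Nat.mul_ne_zero (by omega) (by omega)
    simp [h0, zero_pow hne]
    omega
  · -- main case
    set Qv : ℂ := q ^ ((2 * k + 1) * d) with hQv
    set zv : ℂ := q ^ (d * i) with hzv
    set wv : ℂ := q ^ ((2 * k - i + 1) * d) with hwv
    have hpow : ∀ m : ℕ, 1 ≤ m → ‖q ^ m‖ < 1 := by
      intro m hm
      rw [norm_pow]
      calc ‖q‖ ^ m ≤ ‖q‖ ^ 1 := pow_le_pow_of_le_one (norm_nonneg q) hq.le hm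
        _ = ‖q‖ := pow_one _
        _ < 1 := hq
    have hQn : ‖Qv‖ < 1 := hpow _ (Nat.one_le_iff_ne_zero.2 (Nat.mul_ne_zero (by omega) (by omega)))
    have hzn : ‖zv‖ < 1 := hpow _ (Nat.one_le_iff_ne_zero.2 (Nat.mul_ne_zero (by omega) (by omega)))
    have hwn : ‖wv‖ < 1 :=
      hpow _ (Nat.one_le_iff_ne_zero.2 (Nat.mul_ne_zero (by omega) (by omega)))
    have hQ0 : Qv ≠ 0 := pow_ne_zero _ hq0
    have hw0 : wv ≠ 0 := pow_ne_zero _ hq0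
    have hzw : zv * wv = Qv := by
      rw [hzv, hwv, hQv, ← pow_add]
      congr 1
      have h3 : 2 * k - i + 1 + i = 2 * k + 1 := by omega
      calc d * i + (2 * k - i + 1) * d = (2 * k - i + 1 + i) * d := by ring
        _ = (2 * k + 1) * d := by rw [h3]
    have hqd : ‖q ^ d‖ < 1 := hpow _ hd
    have hterm : ∀ n : ℕ, ((-1 : ℂ)) ^ n * (1 : ℂ) ^ (k * n) *
        q ^ (d * ((2 * k + 1) * n * (n + 1) / 2 - i * n)) *
        (1 - (1 : ℂ) ^ i * q ^ ((2 * n + 1) * d * i)) *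
        qPoch (1 * q ^ d) (q ^ d) n / qPoch (q ^ d) (q ^ d) n =
        (-1 : ℂ) ^ n * Qv ^ (n * (n - 1) / 2) * wv ^ n +
        (-1 : ℂ) ^ (n + 1) * Qv ^ ((n + 1) * n / 2) * zv ^ (n + 1) := by
      intro n
      simp only [one_mul, one_pow, mul_one]
      rw [mul_div_assoc, div_self (qPoch_ne_zero hqd hqd n), mul_one]
      have hq1 : (q : ℂ) ^ (d * ((2 * k + 1) * n * (n + 1) / 2 - i * n)) =
          Qv ^ (n * (n - 1) / 2) * wv ^ n := by
        rw [E1 hik, pow_add, pow_mul q ((2*k+1)*d) (n*(n-1)/2), pow_mul q ((2*k-i+1)*d) n, hQv, hwv]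
      have hq2 : (q : ℂ) ^ (d * ((2 * k + 1) * n * (n + 1) / 2 - i * n)) *
          q ^ ((2 * n + 1) * d * i) = Qv ^ ((n + 1) * n / 2) * zv ^ (n + 1) := by
        rw [← pow_add, E2 hik, pow_add, pow_mul q ((2*k+1)*d) ((n+1)*n/2), pow_mul q (d*i) (n+1), hQv, hzv]
      calc (-1 : ℂ) ^ n * q ^ (d * ((2 * k + 1) * n * (n + 1) / 2 - i * n)) *
            (1 - q ^ ((2 * n + 1) * d * i))
          = (-1 : ℂ) ^ n * q ^ (d * ((2 * k + 1) * n * (n + 1) / 2 - i * n)) -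
            (-1 : ℂ) ^ n * (q ^ (d * ((2 * k + 1) * n * (n + 1) / 2 - i * n)) *
            q ^ ((2 * n + 1) * d * i)) := by ring
        _ = _ := by rw [hq2, hq1]; ring
    rw [Q, one_mul]
    rw [tsum_congr hterm, jtp hQn hzn hwn hQ0 hw0 hzw]
    rw [inv_mul_eq_div]
end

section
/- For each fixed d ≥ 1, k ≥ 1, and 1 ≤ i ≤ k: the two-variable generating function 𝓑_{d,k,i}(a,q) = ∑_{m,n≥0} b_{d,k,i}(m,n) a^m q^n satisfies the q-difference equations 𝓑_{d,k,1}(a) = (1/(aq;q)_{d−1}) 𝓑_{d,k,k}(aq^d) and, for 2 ≤ i ≤ k, 𝓑_{d,k,i}(a) = 𝓑_{d,k,i−1}(a) + (a^{i−1} q^{(i−1)d}/(aq;q)_{d−1}) 𝓑_{d,k,k−i+1}(aq^d). -/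
/-- `b_{d,k,i}(m,n)`: partitions of `n` with exactly `m` parts, where `d` appears at most
`i-1` times and any two consecutive multiples of `d` together appear at most `k-1` times. -/
noncomputable def bcount (d k i m n : ℕ) : ℕ :=
  Nat.card {p : n.Partition //
    p.parts.card = m ∧
    p.parts.count d ≤ i - 1 ∧
    ∀ j : ℕ, 1 ≤ j → p.parts.count (d * j) + p.parts.count (d * j + d) ≤ k - 1}

/-- The two-variable generating function `𝓑_{d,k,i}(a,q)`. -/
noncomputable def Bgf (d k i : ℕ) (a q : ℂ) : ℂ :=
  ∑' p : ℕ × ℕ, (bcount d k i p.1 p.2 : ℂ) * a ^ p.1 * q ^ p.2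


open Multiset Finset

namespace BgfAux


/-- weight of a multiset (partition) -/
noncomputable def W (a q : ℂ) (m : Multiset ℕ) : ℂ := a ^ (Multiset.card m) * q ^ m.sum

lemma geom_partial_le {x : ℝ} (hx : 0 ≤ x) (hx1 : x < 1) (n : ℕ) :
    ∑ i ∈ Finset.range n, x ^ i ≤ (1 - x)⁻¹ := by
  have h1 : (0:ℝ) < 1 - x := by linarith
  rw [inv_eq_one_div, le_div_iff₀ h1]
  have h2 := geom_sum_mul x n
  nlinarith [pow_nonneg hx n]

lemma inv_one_sub_le_exp {x r : ℝ} (hx : 0 ≤ x) (hxr : x ≤ r) (hr : r < 1) :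
    (1 - x)⁻¹ ≤ Real.exp (x / (1 - r)) := by
  have h1 : (0:ℝ) < 1 - x := by linarith
  have h2 : (0:ℝ) < 1 - r := by linarith
  have e1 : (1 - x)⁻¹ = x / (1 - x) + 1 := by field_simp; ring
  have e2 : x / (1 - x) ≤ x / (1 - r) :=
    div_le_div_of_nonneg_left hx h2 (by linarith)
  calc (1 - x)⁻¹ = x / (1 - x) + 1 := e1
    _ ≤ x / (1 - r) + 1 := by linarith
    _ ≤ Real.exp (x / (1 - r)) := by
        have := Real.add_one_le_exp (x / (1 - r)); linarith

lemma prod_count {r s : ℝ} {N : ℕ} (m : Multiset ℕ) (h : ∀ x ∈ m, x < N) :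
    r ^ (Multiset.card m) * s ^ m.sum = ∏ j ∈ Finset.range N, (r * s ^ j) ^ (m.count j) := by
  induction m using Multiset.induction_on with
  | empty => simp
  | cons x m ih =>
    have hx : x < N := h x (Multiset.mem_cons_self x m)
    have hm : ∀ y ∈ m, y < N := fun y hy => h y (Multiset.mem_cons_of_mem hy)
    rw [Multiset.card_cons, Multiset.sum_cons]
    have hc : ∀ j, (x ::ₘ m).count j = m.count j + (if j = x then 1 else 0) := by
      intro j; rw [Multiset.count_cons]
    simp_rw [hc, pow_add]
    rw [Finset.prod_mul_distrib, ← ih hm]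
    have h2 : ∀ j ∈ Finset.range N,
        (r * s ^ j) ^ (if j = x then 1 else 0) = if j = x then r * s ^ x else 1 := by
      intro j _; split_ifs with hj
      · subst hj; rw [pow_one]
      · rw [pow_zero]
    rw [Finset.prod_congr rfl h2, Finset.prod_ite_eq' (Finset.range N) x (fun _ => r * s ^ x),
      if_pos (Finset.mem_range.mpr hx)]
    ring

lemma summable_normW {r s : ℝ} (hr0 : 0 ≤ r) (hr : r < 1) (hs0 : 0 ≤ s) (hs : s < 1) :
    Summable (fun m : Multiset ℕ => r ^ (Multiset.card m) * s ^ m.sum) := by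
  classical
  apply summable_of_sum_le (c := Real.exp (r / (1 - r) * (1 - s)⁻¹))
  · intro m; positivity
  · intro u
    set N := (u.sup fun m => m.sum) + 1 with hN
    set M := u.sup fun m => Multiset.card m with hM
    have hpartlt : ∀ m ∈ u, ∀ x ∈ m, x < N := by
      intro m hm x hx
      have h1 : x ≤ m.sum := Multiset.single_le_sum (fun y _ => Nat.zero_le y) x hx
      have h2 : m.sum ≤ u.sup fun m => m.sum := Finset.le_sup hm
      omega
    have hcnt : ∀ m ∈ u, ∀ j : ℕ, m.count j ≤ M := fun m hm j =>
      le_trans (Multiset.count_le_card j m) (Finset.le_sup hm)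
    calc ∑ m ∈ u, r ^ (Multiset.card m) * s ^ m.sum
        = ∑ m ∈ u, ∏ j : Fin N, (r * s ^ (j:ℕ)) ^ (m.count (j:ℕ)) := by
          refine Finset.sum_congr rfl (fun m hm => ?_)
          rw [prod_count m (hpartlt m hm), ← Fin.prod_univ_eq_prod_range]
      _ = ∑ g ∈ u.image (fun (m : Multiset ℕ) (j : Fin N) => m.count (j:ℕ)),
            ∏ j : Fin N, (r * s ^ (j:ℕ)) ^ (g j) := by
          rw [Finset.sum_image]
          intro x hx y hy hxy
          ext j
          by_cases hj : j < N
          · exact congrFun hxy ⟨j, hj⟩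
          · rw [Multiset.count_eq_zero_of_notMem, Multiset.count_eq_zero_of_notMem]
            · intro hmem; exact hj (hpartlt y hy j hmem)
            · intro hmem; exact hj (hpartlt x hx j hmem)
      _ ≤ ∑ g ∈ Fintype.piFinset (fun _ : Fin N => Finset.range (M+1)),
            ∏ j : Fin N, (r * s ^ (j:ℕ)) ^ (g j) := by
          apply Finset.sum_le_sum_of_subset_of_nonneg
          · intro g hg
            rw [Finset.mem_image] at hg
            obtain ⟨m, hm, rfl⟩ := hg
            rw [Fintype.mem_piFinset]
            intro j
            rw [Finset.mem_range]
            exact Nat.lt_succ_of_le (hcnt m hm (j:ℕ))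
          · intro g _ _; positivity
      _ = ∏ j : Fin N, ∑ c ∈ Finset.range (M+1), (r * s ^ (j:ℕ)) ^ c := by
          rw [Finset.prod_univ_sum]
      _ ≤ ∏ j : Fin N, Real.exp (r * s ^ (j:ℕ) / (1 - r)) := by
          apply Finset.prod_le_prod
          · intro j _; positivity
          · intro j _
            have hx0 : 0 ≤ r * s ^ (j:ℕ) := by positivity
            have hxr : r * s ^ (j:ℕ) ≤ r := by
              calc r * s ^ (j:ℕ) ≤ r * 1 := by
                    apply mul_le_mul_of_nonneg_left _ hr0
                    exact pow_le_one₀ hs0 hs.le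
                _ = r := mul_one r
            exact le_trans (geom_partial_le hx0 (lt_of_le_of_lt hxr hr) (M+1))
              (inv_one_sub_le_exp hx0 hxr hr)
      _ = Real.exp (∑ j : Fin N, r * s ^ (j:ℕ) / (1 - r)) := (Real.exp_sum _ _).symm
      _ ≤ Real.exp (r / (1 - r) * (1 - s)⁻¹) := by
          rw [Real.exp_le_exp]
          have : ∑ j : Fin N, r * s ^ (j:ℕ) / (1 - r)
              = r / (1 - r) * ∑ j ∈ Finset.range N, s ^ j := by
            rw [← Fin.sum_univ_eq_sum_range, Finset.mul_sum]
            refine Finset.sum_congr rfl (fun j _ => ?_); ring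
          rw [this]
          exact mul_le_mul_of_nonneg_left (geom_partial_le hs0 hs N) (div_nonneg hr0 (by linarith))


lemma normW (a q : ℂ) (m : Multiset ℕ) : ‖W a q m‖ = ‖a‖ ^ (Multiset.card m) * ‖q‖ ^ m.sum := by
  simp [W]

lemma summable_W_norm {a q : ℂ} (ha : ‖a‖ < 1) (hq : ‖q‖ < 1) (s : Set (Multiset ℕ)) :
    Summable (fun x : s => ‖W a q (x:Multiset ℕ)‖) := by
  have h := (summable_normW (norm_nonneg a) ha (norm_nonneg q) hq).subtype s
  refine h.congr (fun x => ?_)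
  simp only [Function.comp]
  exact (normW a q x.1).symm

lemma summable_W {a q : ℂ} (ha : ‖a‖ < 1) (hq : ‖q‖ < 1) (s : Set (Multiset ℕ)) :
    Summable (fun x : s => W a q (x:Multiset ℕ)) :=
  (summable_W_norm ha hq s).of_norm

/-- parts of `m` are all in `[1, d-1]` -/
def SmallSet (d : ℕ) : Set (Multiset ℕ) := {m | ∀ x ∈ m, 0 < x ∧ x < d}

lemma small_sum {a q : ℂ} (ha : ‖a‖ < 1) (hq : ‖q‖ < 1) (n : ℕ) :
    ∑' g : SmallSet (n+1), W a q (g:Multiset ℕ) = (qPoch (a*q) q n)⁻¹ := by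
  induction n with
  | zero =>
    have he : SmallSet 1 = {(0 : Multiset ℕ)} := by
      ext m
      simp only [SmallSet, Set.mem_setOf_eq, Set.mem_singleton_iff]
      constructor
      · intro h
        refine Multiset.eq_zero_of_forall_notMem (fun x hx => ?_)
        have := h x hx; omega
      · rintro rfl; simp
    rw [he, tsum_singleton (0 : Multiset ℕ) (W a q), qPoch]
    simp [W]
  | succ n ih =>
    -- build equivalence (SmallSet (n+1)) × ℕ ≃ SmallSet (n+2)
    have hinj : ∀ (p₁ p₂ : ↥(SmallSet (n+1)) × ℕ),
        (p₁.1.1 + Multiset.replicate p₁.2 (n+1)) = (p₂.1.1 + Multiset.replicate p₂.2 (n+1)) →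
        p₁ = p₂ := by
      rintro ⟨⟨g₁, hg₁⟩, c₁⟩ ⟨⟨g₂, hg₂⟩, c₂⟩ h
      have hcount : ∀ x : ℕ, (g₁ + Multiset.replicate c₁ (n+1)).count x
          = (g₂ + Multiset.replicate c₂ (n+1)).count x := fun x => by rw [h]
      have hgc : ∀ (g : Multiset ℕ), g ∈ SmallSet (n+1) → g.count (n+1) = 0 := by
        intro g hg
        refine Multiset.count_eq_zero_of_notMem (fun hmem => ?_)
        have := hg _ hmem; omega
      have hc : c₁ = c₂ := by
        have := hcount (n+1)
        simp [Multiset.count_add, Multiset.count_replicate, hgc g₁ hg₁, hgc g₂ hg₂] at this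
        omega
      have hg : g₁ = g₂ := by
        refine Multiset.ext.mpr (fun x => ?_)
        rcases eq_or_ne x (n+1) with rfl | hx
        · rw [hgc g₁ hg₁, hgc g₂ hg₂]
        · simpa [Multiset.count_add, Multiset.count_replicate, Ne.symm hx] using hcount x
      simp [hc, hg]
    have hmem : ∀ (p : ↥(SmallSet (n+1)) × ℕ),
        (p.1.1 + Multiset.replicate p.2 (n+1)) ∈ SmallSet (n+2) := by
      rintro ⟨⟨g, hg⟩, c⟩ x hx
      rcases Multiset.mem_add.mp hx with h | h
      · have := hg x h; omega
      · have := Multiset.eq_of_mem_replicate h; omega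
    set f : ↥(SmallSet (n+1)) × ℕ → ↥(SmallSet (n+2)) :=
      fun p => ⟨p.1.1 + Multiset.replicate p.2 (n+1), hmem p⟩ with hf
    have hbij : Function.Bijective f := by
      constructor
      · intro p₁ p₂ h
        exact hinj p₁ p₂ (congrArg Subtype.val h)
      · rintro ⟨m, hm⟩
        have hg : m.filter (· < n+1) ∈ SmallSet (n+1) := by
          intro x hx
          rw [Multiset.mem_filter] at hx
          exact ⟨(hm x hx.1).1, hx.2⟩
        refine ⟨⟨⟨m.filter (· < n+1), hg⟩, m.count (n+1)⟩, ?_⟩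
        apply Subtype.ext
        show m.filter (· < n+1) + Multiset.replicate (m.count (n+1)) (n+1) = m
        have h1 : m.filter (fun x => ¬ x < n+1) = m.filter (· = n+1) := by
          apply Multiset.filter_congr
          intro x hx
          have := hm x hx
          constructor <;> intro h <;> omega
        calc m.filter (· < n+1) + Multiset.replicate (m.count (n+1)) (n+1)
            = m.filter (· < n+1) + m.filter (fun x => ¬ x < n+1) := by
              rw [h1, Multiset.filter_eq']
          _ = m := Multiset.filter_add_not _ m
    set e := Equiv.ofBijective f hbij with he
    have hW : ∀ (p : ↥(SmallSet (n+1)) × ℕ),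
        W a q ((f p : ↥(SmallSet (n+2))) : Multiset ℕ)
          = W a q (p.1 : Multiset ℕ) * (a * q^(n+1))^p.2 := by
      rintro ⟨⟨g, hg⟩, c⟩
      show W a q (g + Multiset.replicate c (n+1)) = W a q g * (a * q^(n+1))^c
      simp only [W, Multiset.card_add, Multiset.sum_add, Multiset.card_replicate,
        Multiset.sum_replicate, smul_eq_mul, pow_add, mul_pow, pow_mul]
      ring
    have hnorm : ‖a * q^(n+1)‖ < 1 := by
      rw [norm_mul, norm_pow]
      exact lt_of_le_of_lt
        (mul_le_of_le_one_right (norm_nonneg a) (pow_le_one₀ (norm_nonneg q) hq.le)) ha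
    have hgeo : Summable (fun c : ℕ => ‖(a * q^(n+1))^c‖) := by
      refine Summable.congr (summable_geometric_of_lt_one (norm_nonneg _) hnorm) ?_
      intro c; rw [norm_pow]
    calc ∑' g : SmallSet (n+2), W a q (g:Multiset ℕ)
        = ∑' p : ↥(SmallSet (n+1)) × ℕ, W a q ((f p : ↥(SmallSet (n+2))) : Multiset ℕ) :=
          (e.tsum_eq (fun x : SmallSet (n+2) => W a q (x:Multiset ℕ))).symm
      _ = ∑' p : ↥(SmallSet (n+1)) × ℕ, W a q (p.1 : Multiset ℕ) * (a * q^(n+1))^p.2 :=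
          tsum_congr hW
      _ = (∑' g : SmallSet (n+1), W a q (g:Multiset ℕ)) * ∑' c : ℕ, (a * q^(n+1))^c :=
          (tsum_mul_tsum_of_summable_norm (summable_W_norm ha hq _) hgeo).symm
      _ = (qPoch (a*q) q n)⁻¹ * (1 - a * q^(n+1))⁻¹ := by
          rw [ih, tsum_geometric_of_norm_lt_one hnorm]
      _ = (qPoch (a*q) q (n+1))⁻¹ := by
          rw [qPoch, qPoch, Finset.prod_range_succ, mul_inv]
          congr 2
          ring


def Consec (d k : ℕ) (m : Multiset ℕ) : Prop :=
  ∀ j : ℕ, 1 ≤ j → m.count (d * j) + m.count (d * j + d) ≤ k - 1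

def PSet (d k i : ℕ) : Set (Multiset ℕ) := {m | 0 ∉ m ∧ m.count d ≤ i - 1 ∧ Consec d k m}

def ESet (d k c : ℕ) : Set (Multiset ℕ) := {m | 0 ∉ m ∧ m.count d = c ∧ Consec d k m}

noncomputable def S (d k i : ℕ) (a q : ℂ) : ℂ := ∑' x : PSet d k i, W a q (x:Multiset ℕ)

lemma count_shift (h : Multiset ℕ) (h0 : 0 ∉ h) (d x : ℕ) :
    (h.map (· + d)).count x = if d < x then h.count (x - d) else 0 := by
  split_ifs with hx
  · have hxe := Multiset.count_map_eq_count' (· + d) h (add_left_injective d) (x - d)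
    have he2 : x - d + d = x := by omega
    rw [he2] at hxe
    exact hxe
  · apply Multiset.count_eq_zero_of_notMem
    intro hmem
    rcases Multiset.mem_map.mp hmem with ⟨y, hy, rfl⟩
    have hy0 : y ≠ 0 := by rintro rfl; exact h0 hy
    omega

lemma count_small {d : ℕ} {g : Multiset ℕ} (hg : g ∈ SmallSet d) {x : ℕ} (hx : d ≤ x) :
    g.count x = 0 := by
  apply Multiset.count_eq_zero_of_notMem
  intro hmem
  have := (hg x hmem).2; omega

lemma sum_map_shift (h : Multiset ℕ) (d : ℕ) :
    (h.map (· + d)).sum = h.sum + Multiset.card h * d := by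
  induction h using Multiset.induction_on with
  | empty => simp
  | cons x t ih => simp [ih]; ring

section Main
variable {d k c : ℕ}

lemma count_Phi {g h : Multiset ℕ} (hg : g ∈ SmallSet d) (h0 : 0 ∉ h) (c : ℕ) (x : ℕ) :
    (g + Multiset.replicate c d + h.map (· + d)).count x
      = g.count x + (if x = d then c else 0) + (if d < x then h.count (x - d) else 0) := by
  rw [Multiset.count_add, Multiset.count_add, Multiset.count_replicate, count_shift h h0 d x]
  simp [eq_comm]

lemma count_Phi_small {g h : Multiset ℕ} (hg : g ∈ SmallSet d) (h0 : 0 ∉ h) (c : ℕ) {x : ℕ}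
    (hx : x < d) :
    (g + Multiset.replicate c d + h.map (· + d)).count x = g.count x := by
  rw [count_Phi hg h0 c x, if_neg (by omega), if_neg (by omega)]
  omega

lemma count_Phi_d {g h : Multiset ℕ} (hg : g ∈ SmallSet d) (h0 : 0 ∉ h) (c : ℕ) :
    (g + Multiset.replicate c d + h.map (· + d)).count d = c := by
  rw [count_Phi hg h0 c d, if_pos rfl, if_neg (lt_irrefl d), count_small hg le_rfl]
  omega

lemma count_Phi_big {g h : Multiset ℕ} (hg : g ∈ SmallSet d) (h0 : 0 ∉ h) (c : ℕ) {x : ℕ}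
    (hx : d < x) :
    (g + Multiset.replicate c d + h.map (· + d)).count x = h.count (x - d) := by
  rw [count_Phi hg h0 c x, if_neg (by omega), if_pos hx, count_small hg (by omega)]
  omega

lemma Phi_mem (hd : 1 ≤ d) (hck : c + 1 ≤ k) {g h : Multiset ℕ}
    (hg : g ∈ SmallSet d) (hh : h ∈ PSet d k (k - c)) :
    (g + Multiset.replicate c d + h.map (· + d)) ∈ ESet d k c := by
  obtain ⟨h0, hcd, hcons⟩ := hh
  refine ⟨?_, ?_, ?_⟩
  · rw [← Multiset.count_eq_zero, count_Phi_small hg h0 c (by omega)]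
    apply Multiset.count_eq_zero_of_notMem
    intro hmem; exact absurd (hg 0 hmem).1 (lt_irrefl 0)
  · exact count_Phi_d hg h0 c
  · intro j hj
    rcases eq_or_lt_of_le hj with rfl | hj2
    · rw [mul_one, count_Phi_d hg h0 c, count_Phi_big hg h0 c (by omega : d < d + d)]
      have e1 : d + d - d = d := by omega
      rw [e1]
      omega
    · obtain ⟨j', rfl⟩ : ∃ j', j = j' + 2 := ⟨j - 2, by omega⟩
      have e1 : d * (j' + 2) = d * (j' + 1) + d := by ring
      have e0 : d ≤ d * (j' + 1) := Nat.le_mul_of_pos_right d (by omega)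
      rw [count_Phi_big hg h0 c (show d < d * (j' + 2) by omega),
        count_Phi_big hg h0 c (show d < d * (j' + 2) + d by omega)]
      have e2 : d * (j' + 2) - d = d * (j' + 1) := by omega
      have e3 : d * (j' + 2) + d - d = d * (j' + 1) + d := by omega
      rw [e2, e3]
      have e4 : d * (j' + 1) + d = d * (j' + 2) := by omega
      have := hcons (j' + 1) (by omega)
      rw [e4] at this ⊢
      calc count (d * (j' + 1)) h + count (d * (j' + 2)) h
          ≤ k - 1 := by
            have e5 : d * (j' + 1) + d = d * (j' + 2) := by omega
            rw [← e5]
            exact hcons (j' + 1) (by omega)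

lemma Phi_inj (hd : 1 ≤ d) {g₁ g₂ h₁ h₂ : Multiset ℕ}
    (hg₁ : g₁ ∈ SmallSet d) (hg₂ : g₂ ∈ SmallSet d) (h01 : 0 ∉ h₁) (h02 : 0 ∉ h₂)
    (heq : g₁ + Multiset.replicate c d + h₁.map (· + d)
         = g₂ + Multiset.replicate c d + h₂.map (· + d)) :
    g₁ = g₂ ∧ h₁ = h₂ := by
  constructor
  · refine Multiset.ext.mpr (fun x => ?_)
    by_cases hx : x < d
    · rw [← count_Phi_small hg₁ h01 c hx, ← count_Phi_small hg₂ h02 c hx, heq]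
    · rw [count_small hg₁ (by omega), count_small hg₂ (by omega)]
  · refine Multiset.ext.mpr (fun y => ?_)
    rcases Nat.eq_zero_or_pos y with rfl | hy
    · rw [Multiset.count_eq_zero.mpr h01, Multiset.count_eq_zero.mpr h02]
    · have hxd : d < y + d := by omega
      have e1 : y + d - d = y := by omega
      have this2 : (g₁ + Multiset.replicate c d + h₁.map (· + d)).count (y + d)
          = (g₂ + Multiset.replicate c d + h₂.map (· + d)).count (y + d) := by rw [heq]
      rw [count_Phi_big hg₁ h01 c hxd, count_Phi_big hg₂ h02 c hxd, e1] at this2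
      exact this2

lemma Phi_surj (hd : 1 ≤ d) (hck : c + 1 ≤ k) {m : Multiset ℕ} (hm : m ∈ ESet d k c) :
    ∃ g h : Multiset ℕ, g ∈ SmallSet d ∧ h ∈ PSet d k (k - c) ∧
      g + Multiset.replicate c d + h.map (· + d) = m := by
  obtain ⟨h0, hcd, hcons⟩ := hm
  refine ⟨m.filter (· < d), (m.filter (fun x => d < x)).map (· - d), ?_, ?_, ?_⟩
  · intro x hx
    rw [Multiset.mem_filter] at hx
    have : x ≠ 0 := by rintro rfl; exact h0 hx.1
    exact ⟨by omega, hx.2⟩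
  · have hmapback : ((m.filter (fun x => d < x)).map (· - d)).map (· + d)
        = m.filter (fun x => d < x) := by
      rw [Multiset.map_map]
      have : ∀ x ∈ m.filter (fun x => d < x), (x - d) + d = x := by
        intro x hx
        have := (Multiset.mem_filter.mp hx).2
        omega
      calc (m.filter (fun x => d < x)).map ((· + d) ∘ (· - d))
          = (m.filter (fun x => d < x)).map id := Multiset.map_congr rfl (fun x hx => this x hx)
        _ = _ := Multiset.map_id _
    have hcnt : ∀ y : ℕ, 1 ≤ y → ((m.filter (fun x => d < x)).map (· - d)).count y
        = m.count (y + d) := by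
      intro y hy
      have h1 : ((m.filter (fun x => d < x)).map (· - d)).count y
          = (((m.filter (fun x => d < x)).map (· - d)).map (· + d)).count (y + d) := by
        rw [Multiset.count_map_eq_count' _ _ (add_left_injective d)]
      rw [h1, hmapback, Multiset.count_filter, if_pos (by omega)]
    refine ⟨?_, ?_, ?_⟩
    · intro hmem
      rcases Multiset.mem_map.mp hmem with ⟨y, hy, hy0⟩
      have := (Multiset.mem_filter.mp hy).2
      omega
    · rw [hcnt d (by omega)]
      have := hcons 1 le_rfl
      rw [mul_one] at this
      omega
    · intro j hj
      have hdj : 1 ≤ d * j := Nat.mul_pos hd hj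
      rw [hcnt (d * j) hdj, hcnt (d * j + d) (by omega)]
      have := hcons (j + 1) (by omega)
      have e1 : d * (j + 1) = d * j + d := by ring
      rw [e1] at this
      omega
  · have hmapback : ((m.filter (fun x => d < x)).map (· - d)).map (· + d)
        = m.filter (fun x => d < x) := by
      rw [Multiset.map_map]
      have : ∀ x ∈ m.filter (fun x => d < x), (x - d) + d = x := by
        intro x hx
        have := (Multiset.mem_filter.mp hx).2
        omega
      calc (m.filter (fun x => d < x)).map ((· + d) ∘ (· - d))
          = (m.filter (fun x => d < x)).map id := Multiset.map_congr rfl (fun x hx => this x hx)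
        _ = _ := Multiset.map_id _
    rw [hmapback]
    refine Multiset.ext.mpr (fun x => ?_)
    simp only [Multiset.count_add, Multiset.count_filter, Multiset.count_replicate]
    rcases eq_or_ne x d with rfl | hxd
    · split_ifs <;> omega
    · split_ifs <;> omega

lemma W_Phi (a q : ℂ) (g h : Multiset ℕ) :
    W a q (g + Multiset.replicate c d + h.map (· + d))
      = W a q g * (a ^ c * q ^ (d * c) * W (a * q ^ d) q h) := by
  simp only [W, Multiset.card_add, Multiset.sum_add, Multiset.card_replicate,
    Multiset.sum_replicate, Multiset.card_map, smul_eq_mul, sum_map_shift,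
    pow_add, mul_pow, pow_mul]
  ring

lemma Esum (hd : 1 ≤ d) (hck : c + 1 ≤ k) {a q : ℂ} (ha : ‖a‖ < 1) (hq : ‖q‖ < 1) :
    ∑' x : ESet d k c, W a q (x:Multiset ℕ)
      = a ^ c * q ^ (d * c) * (qPoch (a*q) q (d-1))⁻¹ * S d k (k - c) (a * q ^ d) q := by
  have ha' : ‖a * q ^ d‖ < 1 := by
    rw [norm_mul, norm_pow]
    exact lt_of_le_of_lt
      (mul_le_of_le_one_right (norm_nonneg a) (pow_le_one₀ (norm_nonneg q) hq.le)) ha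
  set f : ↥(SmallSet d) × ↥(PSet d k (k - c)) → ↥(ESet d k c) :=
    fun p => ⟨p.1.1 + Multiset.replicate c d + p.2.1.map (· + d),
      Phi_mem hd hck p.1.2 p.2.2⟩ with hf
  have hbij : Function.Bijective f := by
    constructor
    · rintro ⟨⟨g₁, hg₁⟩, ⟨h₁, hh₁⟩⟩ ⟨⟨g₂, hg₂⟩, ⟨h₂, hh₂⟩⟩ hfeq
      have := Phi_inj (c := c) hd hg₁ hg₂ hh₁.1 hh₂.1 (congrArg Subtype.val hfeq)
      simp [this.1, this.2]
    · rintro ⟨m, hm⟩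
      obtain ⟨g, h, hg, hh, heq⟩ := Phi_surj hd hck hm
      exact ⟨⟨⟨g, hg⟩, ⟨h, hh⟩⟩, Subtype.ext heq⟩
  set e := Equiv.ofBijective f hbij with he
  have hsum2 : Summable (fun h : ↥(PSet d k (k - c)) =>
      ‖a ^ c * q ^ (d * c) * W (a * q ^ d) q (h:Multiset ℕ)‖) := by
    refine ((summable_W_norm ha' hq _).mul_left ‖a ^ c * q ^ (d * c)‖).congr (fun h => ?_)
    exact (norm_mul _ _).symm
  obtain ⟨d', rfl⟩ : ∃ d', d = d' + 1 := ⟨d - 1, by omega⟩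
  calc ∑' x : ESet (d'+1) k c, W a q (x:Multiset ℕ)
      = ∑' p : ↥(SmallSet (d'+1)) × ↥(PSet (d'+1) k (k - c)),
          W a q ((f p : ↥(ESet (d'+1) k c)) : Multiset ℕ) :=
        (e.tsum_eq (fun x : ESet (d'+1) k c => W a q (x:Multiset ℕ))).symm
    _ = ∑' p : ↥(SmallSet (d'+1)) × ↥(PSet (d'+1) k (k - c)),
          W a q (p.1 : Multiset ℕ)
            * (a ^ c * q ^ ((d'+1) * c) * W (a * q ^ (d'+1)) q (p.2 : Multiset ℕ)) :=
        tsum_congr (fun p => W_Phi a q p.1.1 p.2.1)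
    _ = (∑' g : SmallSet (d'+1), W a q (g:Multiset ℕ))
          * ∑' h : ↥(PSet (d'+1) k (k - c)),
              a ^ c * q ^ ((d'+1) * c) * W (a * q ^ (d'+1)) q (h:Multiset ℕ) :=
        (tsum_mul_tsum_of_summable_norm (summable_W_norm ha hq _) hsum2).symm
    _ = a ^ c * q ^ ((d'+1) * c) * (qPoch (a*q) q ((d'+1)-1))⁻¹
          * S (d'+1) k (k - c) (a * q ^ (d'+1)) q := by
        rw [small_sum ha hq d', tsum_mul_left, S]
        simp only [Nat.add_sub_cancel]
        ring

lemma S_split (d k i : ℕ) (hi : 2 ≤ i) {a q : ℂ} (ha : ‖a‖ < 1) (hq : ‖q‖ < 1) :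
    S d k i a q = S d k (i-1) a q + ∑' x : ESet d k (i-1), W a q (x:Multiset ℕ) := by
  have hset : PSet d k i = PSet d k (i-1) ∪ ESet d k (i-1) := by
    ext m
    simp only [PSet, ESet, Set.mem_setOf_eq, Set.mem_union]
    constructor
    · rintro ⟨h0, h1, h2⟩
      by_cases hc : m.count d ≤ (i-1) - 1
      · exact Or.inl ⟨h0, hc, h2⟩
      · exact Or.inr ⟨h0, by omega, h2⟩
    · rintro (⟨h0, h1, h2⟩ | ⟨h0, h1, h2⟩)
      · exact ⟨h0, by omega, h2⟩
      · exact ⟨h0, by omega, h2⟩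
  have hdisj : Disjoint (PSet d k (i-1)) (ESet d k (i-1)) := by
    rw [Set.disjoint_left]
    rintro m ⟨h0, h1, h2⟩ ⟨h0', h1', h2'⟩
    omega
  rw [S, hset, Summable.tsum_union_disjoint hdisj, ← S]
  · exact (summable_W ha hq _).congr (fun x => rfl)
  · exact (summable_W ha hq _).congr (fun x => rfl)

lemma PSet_one (d k : ℕ) : PSet d k 1 = ESet d k 0 := by
  ext m
  simp only [PSet, ESet, Set.mem_setOf_eq]
  constructor
  · rintro ⟨h0, h1, h2⟩; exact ⟨h0, by omega, h2⟩
  · rintro ⟨h0, h1, h2⟩; exact ⟨h0, by omega, h2⟩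

end Main

set_option maxHeartbeats 1000000 in
lemma Bgf_eq_S (d k i : ℕ) {a q : ℂ} (ha : ‖a‖ < 1) (hq : ‖q‖ < 1) :
    Bgf d k i a q = S d k i a q := by
  classical
  let T : ℕ × ℕ → Type := fun p => {t : p.2.Partition //
    t.parts.card = p.1 ∧ t.parts.count d ≤ i - 1 ∧
    ∀ j : ℕ, 1 ≤ j → t.parts.count (d * j) + t.parts.count (d * j + d) ≤ k - 1}
  have hbc : ∀ p : ℕ × ℕ, bcount d k i p.1 p.2 = Nat.card (T p) := fun p => rfl
  let f : (Σ p : ℕ × ℕ, T p) → ↥(PSet d k i) := fun s =>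
    ⟨s.2.1.parts, by
      refine ⟨?_, s.2.2.2.1, s.2.2.2.2⟩
      intro hmem
      exact absurd (s.2.1.parts_pos hmem) (lt_irrefl 0)⟩
  have hbijf : Function.Bijective f := by
    constructor
    · rintro ⟨⟨m₁, n₁⟩, t₁, ht₁⟩ ⟨⟨m₂, n₂⟩, t₂, ht₂⟩ hfe
      have hparts : t₁.parts = t₂.parts := congrArg Subtype.val hfe
      have e₁ : t₁.parts.sum = n₁ := t₁.parts_sum
      have e₂ : t₂.parts.sum = n₂ := t₂.parts_sum
      have hn : n₁ = n₂ := by rw [← e₁, ← e₂, hparts]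
      subst hn
      have ht : t₁ = t₂ := Nat.Partition.ext hparts
      subst ht
      have c₁ : Multiset.card t₁.parts = m₁ := ht₁.1
      have c₂ : Multiset.card t₁.parts = m₂ := ht₂.1
      have hm : m₁ = m₂ := by omega
      subst hm
      rfl
    · rintro ⟨m, h0, hc, hcons⟩
      exact ⟨⟨(Multiset.card m, m.sum),
        ⟨⟨m, fun {x} hx => Nat.pos_of_ne_zero (fun h => h0 (h ▸ hx)), rfl⟩, rfl, hc, hcons⟩⟩, rfl⟩
  have hsum : Summable (fun s : Σ p : ℕ × ℕ, T p => W a q s.2.1.parts) :=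
    (Equiv.ofBijective f hbijf).summable_iff.mpr (summable_W ha hq (PSet d k i))
  calc Bgf d k i a q
      = ∑' p : ℕ × ℕ, ∑' t : T p, W a q t.1.parts := by
        rw [Bgf]
        refine tsum_congr (fun p => ?_)
        haveI := Fintype.ofFinite (T p)
        rw [tsum_fintype]
        have hW : ∀ t : T p, W a q t.1.parts = a ^ p.1 * q ^ p.2 := by
          rintro ⟨t, ht⟩
          show a ^ (Multiset.card t.parts) * q ^ t.parts.sum = a ^ p.1 * q ^ p.2
          rw [ht.1, t.parts_sum]
        rw [Finset.sum_congr rfl (fun t _ => hW t), Finset.sum_const, Finset.card_univ]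
        rw [hbc p, Nat.card_eq_fintype_card]
        rw [nsmul_eq_mul, mul_assoc]
    _ = ∑' s : Σ p : ℕ × ℕ, T p, W a q s.2.1.parts := (Summable.tsum_sigma hsum).symm
    _ = ∑' x : PSet d k i, W a q (x : Multiset ℕ) :=
        (Equiv.ofBijective f hbijf).tsum_eq (fun x : PSet d k i => W a q (x : Multiset ℕ))
    _ = S d k i a q := rfl

end BgfAux

theorem Bgf_qdiff (d k : ℕ) (hd : 1 ≤ d) (hk : 1 ≤ k) (a q : ℂ)
    (ha : ‖a‖ < 1) (hq : ‖q‖ < 1) :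
    Bgf d k 1 a q = (qPoch (a * q) q (d - 1))⁻¹ * Bgf d k k (a * q ^ d) q ∧
    ∀ i : ℕ, 2 ≤ i → i ≤ k →
      Bgf d k i a q = Bgf d k (i - 1) a q +
        a ^ (i - 1) * q ^ ((i - 1) * d) / qPoch (a * q) q (d - 1) *
          Bgf d k (k - i + 1) (a * q ^ d) q := by
  have ha' : ‖a * q ^ d‖ < 1 := by
    rw [norm_mul, norm_pow]
    exact lt_of_le_of_lt
      (mul_le_of_le_one_right (norm_nonneg a) (pow_le_one₀ (norm_nonneg q) hq.le)) ha
  constructor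
  · rw [BgfAux.Bgf_eq_S d k 1 ha hq, BgfAux.Bgf_eq_S d k k ha' hq]
    have h1 : BgfAux.S d k 1 a q = ∑' x : BgfAux.ESet d k 0, BgfAux.W a q (x : Multiset ℕ) := by
      rw [BgfAux.S, BgfAux.PSet_one]
    rw [h1, BgfAux.Esum hd (by omega) ha hq]
    simp
  · intro i hi2 hik
    rw [BgfAux.Bgf_eq_S d k i ha hq, BgfAux.Bgf_eq_S d k (i-1) ha hq,
      BgfAux.Bgf_eq_S d k (k-i+1) ha' hq]
    rw [BgfAux.S_split d k i hi2 ha hq]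
    rw [BgfAux.Esum hd (show (i-1) + 1 ≤ k by omega) ha hq]
    have hki : k - (i - 1) = k - i + 1 := by omega
    rw [hki]
    rw [div_eq_mul_inv, mul_comm (d) (i-1)]
end
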